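/- arXiv:2603.05568 — 7 statements merged into one kernel-verified Lean document; each statement's English description precedes it below -/
import Mathlib

section
/- Let μ be a probability measure on a measurable space 𝒳. Fix an integer m ≥ 1 and let Δ = {ρ ∈ ℝ^m : ρ_s ≥ 0 for all s and Σ_{s=1}^m ρ_s = 1} be the probability simplex. Let C_1, …, C_m : 𝒳 → ℝ be bounded measurable, let ω_1, …, ω_m : 𝒳 → [0,1] be measurable with Σ_{s=1}^m ω_s(x) = 1 for every x, let δ ∈ [0,1], and for ρ ∈ Δ define f_ρ^δ(x) = Σ_{s=1}^m (δ ω_s(x) + (1−δ) ρ_s) C_s(x). Then the minimax equality holds: sup over measurable d : 𝒳 → [0,1] of inf_{ρ ∈ Δ} ∫ f_ρ^δ(x) d(x) dμ(x) = min_{ρ ∈ Δ} ∫ max(f_ρ^δ(x), 0) dμ(x). -/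
/-!
For `ρ` in the simplex the decision function is the convex combination `f_ρ = ∑ ρ_s f_{e_s}` of
its values at the vertices, so a rule `d` is summarised by its vector of vertex values
`c(d)_s = ∫ f_{e_s} d dμ`, and `inf_ρ ∫ f_ρ d dμ = min_s c(d)_s`. These vectors form a convex set
`K`, and every `y ∈ K` has a coordinate `≤ V := sup_d min_s c(d)_s`. Separating `K` from the open
orthant `{y | ∀ s, V < y s}` yields `ρ₀ ∈ Δ` with `∑ ρ₀_s y_s ≤ V` on `K`; applied to the rule
`d = 1{f_{ρ₀} ≥ 0}` this gives `∫ max(f_{ρ₀}, 0) dμ ≤ V`. The reverse inequality `V ≤ ∫ max(f_ρ, 0)`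
holds for every `ρ`, since `f_ρ d ≤ max(f_ρ, 0)` pointwise.
-/

open MeasureTheory Finset

theorem LinearMap.apply_single_eq_mul {ι : Type*} [DecidableEq ι] (f : (ι → ℝ) →ₗ[ℝ] ℝ)
    (i : ι) (a : ℝ) : f (Pi.single i a) = a * f (Pi.single i 1) := by
  rw [← smul_eq_mul a, ← map_smul, ← Pi.single_smul, smul_eq_mul, mul_one]

theorem LinearMap.apply_eq_sum_mul_apply_single {ι : Type*} [Fintype ι] [DecidableEq ι]
    (f : (ι → ℝ) →ₗ[ℝ] ℝ) (y : ι → ℝ) : f y = ∑ i, y i * f (Pi.single i 1) := by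
  conv_lhs => rw [← univ_sum_single y]
  rw [map_sum]
  exact sum_congr rfl fun i _ => f.apply_single_eq_mul i (y i)

theorem LinearMap.apply_single_nonpos_of_forall_lt {ι : Type*} [DecidableEq ι]
    {f : (ι → ℝ) →ₗ[ℝ] ℝ} {V u : ℝ} (h : ∀ y, (∀ i, V < y i) → f y < u) (i : ι) :
    f (Pi.single i 1) ≤ 0 := by
  by_contra! hfi
  let c : ι → ℝ := fun _ => V + 1
  let t := |u - f c| / f (Pi.single i 1)
  have ht : 0 ≤ t := div_nonneg (abs_nonneg _) hfi.le
  have hlt := h (c + Pi.single i t) fun j => by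
    rcases eq_or_ne j i with rfl | hj
    · simp [c]; linarith
    · simp [c, hj]
  rw [map_add, f.apply_single_eq_mul, div_mul_cancel₀ _ hfi.ne'] at hlt
  linarith [le_abs_self (u - f c)]

theorem exists_mem_stdSimplex_forall_sum_mul_le {ι : Type*} [Fintype ι] {K : Set (ι → ℝ)}
    (hKconv : Convex ℝ K) (hKne : K.Nonempty) {V : ℝ} (hK : ∀ y ∈ K, ∃ i, y i ≤ V) :
    ∃ ρ ∈ stdSimplex ℝ ι, ∀ y ∈ K, ∑ i, ρ i * y i ≤ V := by
  classical
  let O : Set (ι → ℝ) := Set.univ.pi fun _ => Set.Ioi V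
  have hdisj : Disjoint O K := Set.disjoint_left.2 fun y hyO hyK => by
    obtain ⟨i, hi⟩ := hK y hyK
    exact (hi.trans_lt (hyO i (Set.mem_univ i))).false
  obtain ⟨f, u, hfO, hfK⟩ := geometric_hahn_banach_open
    (convex_pi fun _ _ => convex_Ioi V) (isOpen_set_pi Set.finite_univ fun _ _ => isOpen_Ioi)
    hKconv hdisj
  let w : ι → ℝ := fun i => -f (Pi.single i 1)
  have hw : ∀ i, 0 ≤ w i := fun i => neg_nonneg.2 <|
    f.toLinearMap.apply_single_nonpos_of_forall_lt (fun y hy => hfO y fun i _ => hy i) i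
  have hf : ∀ y, f y = -∑ i, w i * y i := fun y => by
    simpa [w, mul_comm] using f.toLinearMap.apply_eq_sum_mul_apply_single y
  have hconst : ∀ t, V < t → -u < t * ∑ i, w i := fun t ht => by
    have := hfO (fun _ => t) fun _ _ => ht
    rw [hf, ← sum_mul, mul_comm] at this
    linarith
  obtain ⟨y₀, hy₀⟩ := hKne
  have hwK : ∀ y ∈ K, ∑ i, w i * y i ≤ -u := fun y hy => by linarith [hf y ▸ hfK y hy]
  have hwpos : 0 < ∑ i, w i := by
    refine (sum_nonneg fun i _ => hw i).lt_of_ne fun h => ?_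
    have h1 := hconst (V + 1) (by linarith)
    have h2 := hwK y₀ hy₀
    have : ∑ i, w i * y₀ i = 0 := sum_eq_zero fun i _ => by
      rw [(sum_eq_zero_iff_of_nonneg fun i _ => hw i).1 h.symm i (mem_univ i), zero_mul]
    rw [← h, mul_zero] at h1
    linarith
  have hVu : -u ≤ V * ∑ i, w i := le_of_forall_pos_lt_add fun ε hε => by
    have := hconst (V + ε / ∑ i, w i) (by linarith [div_pos hε hwpos])
    rwa [add_mul, div_mul_cancel₀ _ hwpos.ne'] at this
  refine ⟨fun i => w i / ∑ j, w j, ⟨fun i => div_nonneg (hw i) hwpos.le, ?_⟩, fun y hy => ?_⟩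
  · rw [← sum_div, div_self hwpos.ne']
  · calc ∑ i, w i / (∑ j, w j) * y i = (∑ i, w i * y i) / ∑ j, w j := by
          rw [sum_div]; exact sum_congr rfl fun i _ => div_mul_eq_mul_div _ _ _
      _ ≤ V := by rw [div_le_iff₀ hwpos]; linarith [hwK y hy]

theorem inf'_le_sum_mul_of_mem_stdSimplex {ι : Type*} [Fintype ι] {ρ : ι → ℝ}
    (hρ : ρ ∈ stdSimplex ℝ ι) (h : (univ : Finset ι).Nonempty) (c : ι → ℝ) :
    univ.inf' h c ≤ ∑ i, ρ i * c i :=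
  calc univ.inf' h c = ∑ i, ρ i * univ.inf' h c := by rw [← sum_mul, hρ.2, one_mul]
    _ ≤ ∑ i, ρ i * c i :=
      sum_le_sum fun i _ => mul_le_mul_of_nonneg_left (inf'_le c (mem_univ i)) (hρ.1 i)

theorem mul_le_max_zero_of_mem_Icc {a b : ℝ} (hb : b ∈ Set.Icc (0 : ℝ) 1) : a * b ≤ max a 0 := by
  rcases le_total 0 a with ha | ha
  · exact (mul_le_of_le_one_right ha hb.2).trans (le_max_left a 0)
  · exact (mul_nonpos_of_nonpos_of_nonneg ha hb.1).trans (le_max_right a 0)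

section Rules

variable {𝓧 : Type*} [MeasurableSpace 𝓧] {μ : Measure 𝓧} {g d : 𝓧 → ℝ}

theorem MeasureTheory.Integrable.mul_of_mem_Icc (hg : Integrable g μ) (hd : Measurable d)
    (hd01 : ∀ x, d x ∈ Set.Icc (0 : ℝ) 1) : Integrable (fun x => g x * d x) μ :=
  hg.mul_bdd hd.aestronglyMeasurable (c := 1) <| ae_of_all _ fun x => by
    rw [Real.norm_eq_abs, abs_of_nonneg (hd01 x).1]; exact (hd01 x).2

theorem integral_mul_le_integral_max_zero (hg : Integrable g μ) (hd : Measurable d)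
    (hd01 : ∀ x, d x ∈ Set.Icc (0 : ℝ) 1) :
    ∫ x, g x * d x ∂μ ≤ ∫ x, max (g x) 0 ∂μ :=
  integral_mono (hg.mul_of_mem_Icc hd hd01) hg.pos_part fun x => mul_le_max_zero_of_mem_Icc (hd01 x)

theorem exists_integral_mul_eq_integral_max_zero (hg : Measurable g) :
    ∃ d : 𝓧 → ℝ, Measurable d ∧ (∀ x, d x ∈ Set.Icc (0 : ℝ) 1) ∧
      ∫ x, g x * d x ∂μ = ∫ x, max (g x) 0 ∂μ := by
  classical
  refine ⟨fun x => if 0 ≤ g x then 1 else 0,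
    Measurable.ite (measurableSet_le measurable_const hg) measurable_const measurable_const,
    fun x => by dsimp only; split_ifs <;> norm_num, integral_congr_ae (ae_of_all _ fun x => ?_)⟩
  rcases le_or_gt 0 (g x) with h | h
  · simp [h]
  · simp [h.not_ge, h.le]

end Rules

section AffineFamily

variable {𝓧 ι : Type*} [MeasurableSpace 𝓧] {μ : Measure 𝓧} [DecidableEq ι]
  {F : (ι → ℝ) → 𝓧 → ℝ} {d : 𝓧 → ℝ}

noncomputable def vertexValues (μ : Measure 𝓧) (F : (ι → ℝ) → 𝓧 → ℝ) (d : 𝓧 → ℝ) : ι → ℝ :=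
  fun s => ∫ x, F (Pi.single s 1) x * d x ∂μ

theorem convex_vertexValues (hFint : ∀ s, Integrable (F (Pi.single s 1)) μ) :
    Convex ℝ {y | ∃ d : 𝓧 → ℝ, Measurable d ∧ (∀ x, d x ∈ Set.Icc (0 : ℝ) 1) ∧
      y = vertexValues μ F d} := by
  rintro _ ⟨d₁, hd₁, hd₁01, rfl⟩ _ ⟨d₂, hd₂, hd₂01, rfl⟩ a b ha hb hab
  refine ⟨fun x => a * d₁ x + b * d₂ x, (hd₁.const_mul a).add (hd₂.const_mul b),
    fun x => convex_Icc 0 1 (hd₁01 x) (hd₂01 x) ha hb hab, funext fun s => ?_⟩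
  have h₁ := ((hFint s).mul_of_mem_Icc hd₁ hd₁01).const_mul a
  have h₂ := ((hFint s).mul_of_mem_Icc hd₂ hd₂01).const_mul b
  simp only [vertexValues, Pi.add_apply, Pi.smul_apply, smul_eq_mul, mul_add, mul_left_comm _ a,
    mul_left_comm _ b, integral_add h₁ h₂, integral_const_mul]

variable [Fintype ι]

theorem measurable_of_mem_stdSimplex
    (hF : ∀ ρ ∈ stdSimplex ℝ ι, ∀ x, F ρ x = ∑ s, ρ s * F (Pi.single s 1) x)
    (hFmeas : ∀ s, Measurable (F (Pi.single s 1)))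
    {ρ : ι → ℝ} (hρ : ρ ∈ stdSimplex ℝ ι) : Measurable (F ρ) := by
  rw [funext (hF ρ hρ)]
  exact Finset.measurable_sum _ fun s _ => (hFmeas s).const_mul (ρ s)

theorem integrable_of_mem_stdSimplex
    (hF : ∀ ρ ∈ stdSimplex ℝ ι, ∀ x, F ρ x = ∑ s, ρ s * F (Pi.single s 1) x)
    (hFint : ∀ s, Integrable (F (Pi.single s 1)) μ)
    {ρ : ι → ℝ} (hρ : ρ ∈ stdSimplex ℝ ι) : Integrable (F ρ) μ := by
  rw [funext (hF ρ hρ)]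
  exact integrable_finsetSum _ fun s _ => (hFint s).const_mul (ρ s)

theorem integral_mul_eq_sum_vertexValues
    (hF : ∀ ρ ∈ stdSimplex ℝ ι, ∀ x, F ρ x = ∑ s, ρ s * F (Pi.single s 1) x)
    (hFint : ∀ s, Integrable (F (Pi.single s 1)) μ)
    {ρ : ι → ℝ} (hρ : ρ ∈ stdSimplex ℝ ι) (hd : Measurable d)
    (hd01 : ∀ x, d x ∈ Set.Icc (0 : ℝ) 1) :
    ∫ x, F ρ x * d x ∂μ = ∑ s, ρ s * vertexValues μ F d s := by
  simp_rw [hF ρ hρ, sum_mul, mul_assoc]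
  rw [integral_finsetSum _ fun s _ => ((hFint s).mul_of_mem_Icc hd hd01).const_mul (ρ s)]
  simp only [vertexValues, integral_const_mul]

theorem sInf_integral_mul_eq_inf'_vertexValues [Nonempty ι]
    (hF : ∀ ρ ∈ stdSimplex ℝ ι, ∀ x, F ρ x = ∑ s, ρ s * F (Pi.single s 1) x)
    (hFint : ∀ s, Integrable (F (Pi.single s 1)) μ) (hd : Measurable d)
    (hd01 : ∀ x, d x ∈ Set.Icc (0 : ℝ) 1) :
    sInf {w | ∃ ρ ∈ stdSimplex ℝ ι, w = ∫ x, F ρ x * d x ∂μ} =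
      univ.inf' univ_nonempty (vertexValues μ F d) := by
  refine IsLeast.csInf_eq ⟨?_, ?_⟩
  · obtain ⟨s, -, hs⟩ := exists_mem_eq_inf' univ_nonempty (vertexValues μ F d)
    refine ⟨Pi.single s 1, single_mem_stdSimplex ℝ s, ?_⟩
    rw [integral_mul_eq_sum_vertexValues hF hFint (single_mem_stdSimplex ℝ s) hd hd01, hs]
    simp [Pi.single_apply]
  · rintro _ ⟨ρ, hρ, rfl⟩
    rw [integral_mul_eq_sum_vertexValues hF hFint hρ hd hd01]
    exact inf'_le_sum_mul_of_mem_stdSimplex hρ _ _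

theorem exists_isLeast_integral_max_zero_eq_sSup_sInf [Nonempty ι]
    (hF : ∀ ρ ∈ stdSimplex ℝ ι, ∀ x, F ρ x = ∑ s, ρ s * F (Pi.single s 1) x)
    (hFmeas : ∀ s, Measurable (F (Pi.single s 1)))
    (hFint : ∀ s, Integrable (F (Pi.single s 1)) μ) :
    ∃ ρ₀ ∈ stdSimplex ℝ ι,
      IsLeast {w | ∃ ρ ∈ stdSimplex ℝ ι, w = ∫ x, max (F ρ x) 0 ∂μ} (∫ x, max (F ρ₀ x) 0 ∂μ) ∧
      sSup {v | ∃ d : 𝓧 → ℝ, Measurable d ∧ (∀ x, d x ∈ Set.Icc (0 : ℝ) 1) ∧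
          v = sInf {w | ∃ ρ ∈ stdSimplex ℝ ι, w = ∫ x, F ρ x * d x ∂μ}} =
        ∫ x, max (F ρ₀ x) 0 ∂μ := by
  set S := {v | ∃ d : 𝓧 → ℝ, Measurable d ∧ (∀ x, d x ∈ Set.Icc (0 : ℝ) 1) ∧
    v = sInf {w | ∃ ρ ∈ stdSimplex ℝ ι, w = ∫ x, F ρ x * d x ∂μ}}
  have hweak : ∀ v ∈ S, ∀ ρ ∈ stdSimplex ℝ ι, v ≤ ∫ x, max (F ρ x) 0 ∂μ := by
    rintro _ ⟨d, hd, hd01, rfl⟩ ρ hρ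
    rw [sInf_integral_mul_eq_inf'_vertexValues hF hFint hd hd01]
    calc univ.inf' univ_nonempty (vertexValues μ F d) ≤ ∑ s, ρ s * vertexValues μ F d s :=
          inf'_le_sum_mul_of_mem_stdSimplex hρ _ _
      _ = ∫ x, F ρ x * d x ∂μ := (integral_mul_eq_sum_vertexValues hF hFint hρ hd hd01).symm
      _ ≤ ∫ x, max (F ρ x) 0 ∂μ :=
          integral_mul_le_integral_max_zero (integrable_of_mem_stdSimplex hF hFint hρ) hd hd01
  have hSne : S.Nonempty := ⟨_, 0, measurable_const, fun _ => ⟨le_rfl, zero_le_one⟩, rfl⟩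
  have hSbdd : BddAbove S :=
    ⟨_, fun v hv => hweak v hv _ (single_mem_stdSimplex ℝ (Classical.arbitrary ι))⟩
  obtain ⟨ρ₀, hρ₀, hsep⟩ := exists_mem_stdSimplex_forall_sum_mul_le (convex_vertexValues hFint)
    ⟨_, 0, measurable_const, fun _ => ⟨le_rfl, zero_le_one⟩, rfl⟩ (V := sSup S) (by
      rintro _ ⟨d, hd, hd01, rfl⟩
      obtain ⟨s, -, hs⟩ := exists_mem_eq_inf' univ_nonempty (vertexValues μ F d)
      exact ⟨s, hs ▸ le_csSup hSbdd
        ⟨d, hd, hd01, (sInf_integral_mul_eq_inf'_vertexValues hF hFint hd hd01).symm⟩⟩)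
  have hstrong : ∫ x, max (F ρ₀ x) 0 ∂μ ≤ sSup S := by
    obtain ⟨d₀, hd₀, hd₀01, hd₀max⟩ :=
      exists_integral_mul_eq_integral_max_zero (μ := μ) (measurable_of_mem_stdSimplex hF hFmeas hρ₀)
    rw [← hd₀max, integral_mul_eq_sum_vertexValues hF hFint hρ₀ hd₀ hd₀01]
    exact hsep _ ⟨d₀, hd₀, hd₀01, rfl⟩
  have hV : sSup S = ∫ x, max (F ρ₀ x) 0 ∂μ :=
    le_antisymm (csSup_le hSne fun v hv => hweak v hv ρ₀ hρ₀) hstrong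
  refine ⟨ρ₀, hρ₀, ⟨⟨ρ₀, hρ₀, rfl⟩, ?_⟩, hV⟩
  rintro _ ⟨ρ, hρ, rfl⟩
  exact hV ▸ csSup_le hSne fun v hv => hweak v hv ρ hρ

end AffineFamily

section Mixture

variable {ι : Type*} [Fintype ι] [DecidableEq ι] (δ : ℝ) (ω C : ι → ℝ)

theorem sum_mix_single_mul (s : ι) :
    ∑ t, (δ * ω t + (1 - δ) * (Pi.single s 1 : ι → ℝ) t) * C t =
      δ * ∑ t, ω t * C t + (1 - δ) * C s := by
  simp [add_mul, sum_add_distrib, mul_sum, Pi.single_apply, mul_assoc]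

theorem sum_mix_mul_eq_sum_mul_sum_mix_single_mul {ρ : ι → ℝ} (hρ : ∑ s, ρ s = 1) :
    ∑ t, (δ * ω t + (1 - δ) * ρ t) * C t =
      ∑ s, ρ s * ∑ t, (δ * ω t + (1 - δ) * (Pi.single s 1 : ι → ℝ) t) * C t := by
  simp_rw [sum_mix_single_mul, mul_add, sum_add_distrib, ← sum_mul, hρ, one_mul, add_mul, mul_sum]
  simp only [mul_assoc, mul_left_comm (ρ _), sum_add_distrib]

end Mixture

theorem minimax_equality_pdro_general
    {𝓧 : Type*} [MeasurableSpace 𝓧] (μ : Measure 𝓧) [IsProbabilityMeasure μ]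
    (m : ℕ) (hm : 1 ≤ m)
    (C : Fin m → 𝓧 → ℝ) (hCmeas : ∀ s, Measurable (C s))
    (B : ℝ) (hCbd : ∀ s x, |C s x| ≤ B)
    (ω : Fin m → 𝓧 → ℝ) (hωmeas : ∀ s, Measurable (ω s))
    (hω01 : ∀ s x, ω s x ∈ Set.Icc (0:ℝ) 1)
    (δ : ℝ) :
    ∃ ρ₀ ∈ stdSimplex ℝ (Fin m),
      IsLeast {w : ℝ | ∃ ρ ∈ stdSimplex ℝ (Fin m),
          w = ∫ x, max (∑ s, (δ * ω s x + (1 - δ) * ρ s) * C s x) 0 ∂μ}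
        (∫ x, max (∑ s, (δ * ω s x + (1 - δ) * ρ₀ s) * C s x) 0 ∂μ)
      ∧ sSup {v : ℝ | ∃ d : 𝓧 → ℝ, Measurable d ∧ (∀ x, d x ∈ Set.Icc (0:ℝ) 1) ∧
            v = sInf {w : ℝ | ∃ ρ ∈ stdSimplex ℝ (Fin m),
                w = ∫ x, (∑ s, (δ * ω s x + (1 - δ) * ρ s) * C s x) * d x ∂μ}}
          = ∫ x, max (∑ s, (δ * ω s x + (1 - δ) * ρ₀ s) * C s x) 0 ∂μ := by
  have : Nonempty (Fin m) := Fin.pos_iff_nonempty.mp hm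
  have hCint : ∀ s, Integrable (C s) μ := fun s =>
    .of_bound (hCmeas s).aestronglyMeasurable B (ae_of_all _ fun x => hCbd s x)
  have hωCint : ∀ s, Integrable (fun x => ω s x * C s x) μ := fun s =>
    (hCint s).bdd_mul (c := 1) (hωmeas s).aestronglyMeasurable <| ae_of_all _ fun x => by
      rw [Real.norm_eq_abs, abs_of_nonneg (hω01 s x).1]; exact (hω01 s x).2
  refine exists_isLeast_integral_max_zero_eq_sSup_sInf
    (F := fun ρ x => ∑ s, (δ * ω s x + (1 - δ) * ρ s) * C s x)
    (fun ρ hρ x => sum_mix_mul_eq_sum_mul_sum_mix_single_mul δ _ _ hρ.2) (fun s => ?_) (fun s => ?_)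
  · exact Finset.measurable_sum _ fun t _ => ((hωmeas t).const_mul δ).add_const _ |>.mul (hCmeas t)
  · simp_rw [sum_mix_single_mul]
    exact ((integrable_finsetSum _ fun t _ => hωCint t).const_mul δ).add ((hCint s).const_mul _)

/-- Minimax equality behind Theorems 1 and 2 of the paper: for bounded measurable source
CATEs, the supremum over (randomized) `[0,1]`-valued rules `d` of the worst-case policy value
`inf_{ρ ∈ Δ} ∫ f_ρ^δ d dμ` equals `min_{ρ ∈ Δ} ∫ max(f_ρ^δ, 0) dμ`, the minimum being
attained at some `ρ₀ ∈ Δ`. -/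
theorem minimax_equality_pdro
    {𝓧 : Type*} [MeasurableSpace 𝓧] (μ : Measure 𝓧) [IsProbabilityMeasure μ]
    (m : ℕ) (hm : 1 ≤ m)
    (C : Fin m → 𝓧 → ℝ) (hCmeas : ∀ s, Measurable (C s))
    (B : ℝ) (hCbd : ∀ s x, |C s x| ≤ B)
    (ω : Fin m → 𝓧 → ℝ) (hωmeas : ∀ s, Measurable (ω s))
    (hω01 : ∀ s x, ω s x ∈ Set.Icc (0:ℝ) 1) (hωsum : ∀ x, (∑ s, ω s x) = 1)
    (δ : ℝ) (hδ : δ ∈ Set.Icc (0:ℝ) 1) :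
    ∃ ρ₀ ∈ stdSimplex ℝ (Fin m),
      IsLeast {w : ℝ | ∃ ρ ∈ stdSimplex ℝ (Fin m),
          w = ∫ x, max (∑ s, (δ * ω s x + (1 - δ) * ρ s) * C s x) 0 ∂μ}
        (∫ x, max (∑ s, (δ * ω s x + (1 - δ) * ρ₀ s) * C s x) 0 ∂μ)
      ∧ sSup {v : ℝ | ∃ d : 𝓧 → ℝ, Measurable d ∧ (∀ x, d x ∈ Set.Icc (0:ℝ) 1) ∧
            v = sInf {w : ℝ | ∃ ρ ∈ stdSimplex ℝ (Fin m),
                w = ∫ x, (∑ s, (δ * ω s x + (1 - δ) * ρ s) * C s x) * d x ∂μ}}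
          = ∫ x, max (∑ s, (δ * ω s x + (1 - δ) * ρ₀ s) * C s x) 0 ∂μ :=
  minimax_equality_pdro_general μ m hm C hCmeas B hCbd ω hωmeas hω01 δ
end

section
/- Let μ be a probability measure on a measurable space 𝒳. Fix an integer m ≥ 1 and let Δ = {ρ ∈ ℝ^m : ρ_s ≥ 0 for all s and Σ_{s=1}^m ρ_s = 1} be the probability simplex. Let C_1, …, C_m : 𝒳 → ℝ be bounded measurable and for ρ ∈ Δ set f_ρ(x) = Σ_{s=1}^m ρ_s C_s(x). Suppose ρ* ∈ Δ minimizes ρ ↦ ∫ max(f_ρ, 0) dμ over Δ and that μ({x : f_{ρ*}(x) = 0}) = 0. Then the rule d*(x) = 1{f_{ρ*}(x) > 0} satisfies: (i) inf_{ρ ∈ Δ} ∫ f_ρ(x) d*(x) dμ(x) = ∫ max(f_{ρ*}(x), 0) dμ(x) = min_{ρ ∈ Δ} ∫ max(f_ρ(x), 0) dμ(x); and (ii) for every measurable d : 𝒳 → {0,1}, inf_{ρ ∈ Δ} ∫ f_ρ(x) d(x) dμ(x) ≤ inf_{ρ ∈ Δ} ∫ f_ρ(x) d*(x) dμ(x).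 That is, d* maximizes the worst-case policy value over mixtures of the source distributions. -/
/-!
Write `f_ρ = Σ_s ρ_s C_s` and `Φ(ρ) = ∫ max(f_ρ, 0) dμ`. Away from `{f_{ρ*} = 0}`, which is
`μ`-null, `max(·, 0)` is differentiable along the segment from `ρ*` to `ρ`, so dominated
convergence gives the one-sided derivative
`∂/∂t Φ(ρ* + t(ρ - ρ*)) |_{t=0⁺} = ∫ (f_ρ - f_{ρ*}) 1{f_{ρ*} > 0} dμ`.
Minimality of `ρ*` on the convex simplex makes it nonnegative, i.e. the worst case of `d*` over
`Δ` is attained at `ρ*`, with value `Φ(ρ*)`. Any `{0,1}`-valued rule `d` is no better there: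
`f_{ρ*} d ≤ max(f_{ρ*}, 0)` pointwise.
-/

open MeasureTheory Filter Topology Set

lemma mul_ite_pos_eq_max_zero (a : ℝ) : a * (if 0 < a then 1 else 0) = max a 0 := by
  split_ifs with h
  · rw [mul_one, max_eq_left h.le]
  · rw [mul_zero, max_eq_right (not_lt.1 h)]

lemma mul_le_max_zero_of_eq_zero_or_eq_one {a d : ℝ} (hd : d = 0 ∨ d = 1) :
    a * d ≤ max a 0 := by
  rcases hd with rfl | rfl <;> simp

lemma abs_le_one_of_eq_zero_or_eq_one {d : ℝ} (hd : d = 0 ∨ d = 1) : |d| ≤ 1 := by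
  rcases hd with rfl | rfl <;> simp

lemma abs_slope_max_zero_le (a b : ℝ) {t : ℝ} (ht : 0 < t) :
    |(max (a + t * b) 0 - max a 0) / t| ≤ |b| := by
  rw [abs_div, abs_of_pos ht, div_le_iff₀ ht]
  calc |max (a + t * b) 0 - max a 0| ≤ |a + t * b - a| := abs_max_sub_max_le_abs _ _ _
    _ = |b| * t := by rw [add_sub_cancel_left, abs_mul, abs_of_pos ht, mul_comm]

lemma tendsto_slope_max_zero {a : ℝ} (ha : a ≠ 0) (b : ℝ) :
    Tendsto (fun t => (max (a + t * b) 0 - max a 0) / t) (𝓝[>] 0)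
      (𝓝 (b * if 0 < a then 1 else 0)) := by
  have hline : Tendsto (fun t : ℝ => a + t * b) (𝓝[>] 0) (𝓝 a) :=
    tendsto_nhdsWithin_of_tendsto_nhds
      ((by fun_prop : Continuous fun t : ℝ => a + t * b).tendsto' 0 a (by simp))
  rcases ha.lt_or_gt with hneg | hpos
  · refine tendsto_const_nhds.congr' ?_
    filter_upwards [hline.eventually (eventually_lt_nhds hneg)] with t ht
    simp [max_eq_right ht.le, max_eq_right hneg.le, not_lt.2 hneg.le]
  · refine tendsto_const_nhds.congr' ?_
    filter_upwards [hline.eventually (eventually_gt_nhds hpos), self_mem_nhdsWithin] with t ht ht0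
    rw [max_eq_left ht.le, max_eq_left hpos.le, add_sub_cancel_left,
      mul_div_cancel_left₀ _ ht0.ne', if_pos hpos, mul_one]

lemma abs_sum_mul_le_of_mem_stdSimplex {ι : Type*} [Fintype ι] {ρ c : ι → ℝ} {B : ℝ}
    (hρ : ρ ∈ stdSimplex ℝ ι) (hc : ∀ s, |c s| ≤ B) : |∑ s, ρ s * c s| ≤ B :=
  calc |∑ s, ρ s * c s| ≤ ∑ s, |ρ s * c s| := Finset.abs_sum_le_sum_abs _ _
    _ = ∑ s, ρ s * |c s| :=
        Finset.sum_congr rfl fun s _ => by rw [abs_mul, abs_of_nonneg (hρ.1 s)]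
    _ ≤ ∑ s, ρ s * B := Finset.sum_le_sum fun s _ => mul_le_mul_of_nonneg_left (hc s) (hρ.1 s)
    _ = B := by rw [← Finset.sum_mul, hρ.2, one_mul]

lemma sum_add_smul_sub_mul {ι : Type*} [Fintype ι] (ρ' ρ c : ι → ℝ) (t : ℝ) :
    ∑ s, (ρ' + t • (ρ - ρ')) s * c s
      = ∑ s, ρ' s * c s + t * (∑ s, ρ s * c s - ∑ s, ρ' s * c s) := by
  rw [mul_sub, Finset.mul_sum, Finset.mul_sum, ← Finset.sum_sub_distrib, ← Finset.sum_add_distrib]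
  refine Finset.sum_congr rfl fun s _ => ?_
  simp only [Pi.add_apply, Pi.smul_apply, Pi.sub_apply, smul_eq_mul]
  ring

section
variable {α : Type*} [MeasurableSpace α] {μ : Measure α} {a b g : α → ℝ}

theorem tendsto_slope_integral_max_zero (ha : Integrable a μ) (hb : Integrable b μ)
    (hnodeg : μ {x | a x = 0} = 0) :
    Tendsto (fun t => ((∫ x, max (a x + t * b x) 0 ∂μ) - ∫ x, max (a x) 0 ∂μ) / t) (𝓝[>] 0)
      (𝓝 (∫ x, b x * (if 0 < a x then 1 else 0) ∂μ)) := by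
  have hpos : ∀ t : ℝ, Integrable (fun x => max (a x + t * b x) 0) μ :=
    fun t => (ha.add (hb.const_mul t)).pos_part
  have hint : ∀ t : ℝ, Integrable (fun x => (max (a x + t * b x) 0 - max (a x) 0) / t) μ :=
    fun t => ((hpos t).sub ha.pos_part).div_const t
  have hslope : ∀ t : ℝ, ((∫ x, max (a x + t * b x) 0 ∂μ) - ∫ x, max (a x) 0 ∂μ) / t
      = ∫ x, (max (a x + t * b x) 0 - max (a x) 0) / t ∂μ := fun t => by
    rw [integral_div, integral_sub (hpos t) ha.pos_part]
  simp_rw [hslope]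
  refine tendsto_integral_filter_of_dominated_convergence (fun x => |b x|)
    (Eventually.of_forall fun t => (hint t).aestronglyMeasurable) ?_ hb.abs ?_
  · filter_upwards [self_mem_nhdsWithin] with t ht
    exact ae_of_all _ fun x => abs_slope_max_zero_le (a x) (b x) ht
  · filter_upwards [measure_eq_zero_iff_ae_notMem.1 hnodeg] with x hx
    exact tendsto_slope_max_zero hx (b x)

theorem integral_max_zero_le_integral_mul_ite (ha : Measurable a) (hai : Integrable a μ)
    (hg : Integrable g μ) (hnodeg : μ {x | a x = 0} = 0)
    (hmin : ∀ t ∈ Ioc (0 : ℝ) 1,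
      (∫ x, max (a x) 0 ∂μ) ≤ ∫ x, max (a x + t * (g x - a x)) 0 ∂μ) :
    (∫ x, max (a x) 0 ∂μ) ≤ ∫ x, g x * (if 0 < a x then 1 else 0) ∂μ := by
  have hslope_nonneg : ∀ᶠ t in 𝓝[>] (0 : ℝ),
      0 ≤ ((∫ x, max (a x + t * (g x - a x)) 0 ∂μ) - ∫ x, max (a x) 0 ∂μ) / t := by
    filter_upwards [Ioc_mem_nhdsGT one_pos] with t ht
    exact div_nonneg (sub_nonneg.2 (hmin t ht)) ht.1.le
  have hderiv := ge_of_tendsto (tendsto_slope_integral_max_zero hai (hg.sub hai) hnodeg)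
    hslope_nonneg
  have hdstar : AEStronglyMeasurable (fun x => if 0 < a x then (1 : ℝ) else 0) μ :=
    (Measurable.ite (measurableSet_lt measurable_const ha) measurable_const
      measurable_const).aestronglyMeasurable
  have hbdd : ∀ᵐ x ∂μ, ‖(if 0 < a x then (1 : ℝ) else 0)‖ ≤ 1 :=
    ae_of_all _ fun x => abs_le_one_of_eq_zero_or_eq_one (ite_eq_or_eq _ _ _).symm
  simp only [Pi.sub_apply, sub_mul] at hderiv
  rw [integral_sub (hg.mul_bdd hdstar hbdd) (hai.mul_bdd hdstar hbdd)] at hderiv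
  simp only [mul_ite_pos_eq_max_zero] at hderiv
  linarith

variable {ι : Type*} [Fintype ι] {C : ι → α → ℝ} {B : ℝ}

lemma integrable_sum_mul [IsFiniteMeasure μ] (hC : ∀ s, Measurable (C s))
    (hCbd : ∀ s x, |C s x| ≤ B) (ρ : ι → ℝ) : Integrable (fun x => ∑ s, ρ s * C s x) μ :=
  integrable_finsetSum _ fun s _ =>
    (Integrable.of_bound (hC s).aestronglyMeasurable B (ae_of_all _ (hCbd s))).const_mul (ρ s)

lemma bddBelow_integral_sum_mul_mul [IsProbabilityMeasure μ] (hCbd : ∀ s x, |C s x| ≤ B)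
    {d : α → ℝ} (hd : ∀ x, d x = 0 ∨ d x = 1) :
    BddBelow {v | ∃ ρ ∈ stdSimplex ℝ ι, v = ∫ x, (∑ s, ρ s * C s x) * d x ∂μ} := by
  refine ⟨-B, ?_⟩
  rintro _ ⟨ρ, hρ, rfl⟩
  have hbound : ∀ x, ‖(∑ s, ρ s * C s x) * d x‖ ≤ B := fun x => by
    rw [Real.norm_eq_abs, abs_mul]
    exact (mul_le_of_le_one_right (abs_nonneg _) (abs_le_one_of_eq_zero_or_eq_one (hd x))).trans
      (abs_sum_mul_le_of_mem_stdSimplex hρ fun s => hCbd s x)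
  have hnorm := norm_integral_le_of_norm_le_const (μ := μ) (ae_of_all _ hbound)
  rw [probReal_univ, mul_one, Real.norm_eq_abs] at hnorm
  exact neg_le_of_abs_le hnorm
end

theorem dro_itr_closed_form_general
    {𝓧 : Type*} [MeasurableSpace 𝓧] (μ : Measure 𝓧) [IsProbabilityMeasure μ]
    (m : ℕ)
    (C : Fin m → 𝓧 → ℝ) (hCmeas : ∀ s, Measurable (C s))
    (B : ℝ) (hCbd : ∀ s x, |C s x| ≤ B)
    (ρstar : Fin m → ℝ) (hρstar : ρstar ∈ stdSimplex ℝ (Fin m))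
    (hmin : ∀ ρ ∈ stdSimplex ℝ (Fin m),
        (∫ x, max (∑ s, ρstar s * C s x) 0 ∂μ) ≤ ∫ x, max (∑ s, ρ s * C s x) 0 ∂μ)
    (hnodeg : μ {x | (∑ s, ρstar s * C s x) = 0} = 0) :
    (sInf {v : ℝ | ∃ ρ ∈ stdSimplex ℝ (Fin m),
          v = ∫ x, (∑ s, ρ s * C s x) * (if 0 < (∑ s, ρstar s * C s x) then (1:ℝ) else 0) ∂μ}
        = ∫ x, max (∑ s, ρstar s * C s x) 0 ∂μ)
    ∧ IsLeast {w : ℝ | ∃ ρ ∈ stdSimplex ℝ (Fin m),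
          w = ∫ x, max (∑ s, ρ s * C s x) 0 ∂μ}
        (∫ x, max (∑ s, ρstar s * C s x) 0 ∂μ)
    ∧ ∀ d : 𝓧 → ℝ, Measurable d → (∀ x, d x = 0 ∨ d x = 1) →
        sInf {v : ℝ | ∃ ρ ∈ stdSimplex ℝ (Fin m),
            v = ∫ x, (∑ s, ρ s * C s x) * d x ∂μ}
          ≤ sInf {v : ℝ | ∃ ρ ∈ stdSimplex ℝ (Fin m),
              v = ∫ x, (∑ s, ρ s * C s x)
                  * (if 0 < (∑ s, ρstar s * C s x) then (1:ℝ) else 0) ∂μ} := by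
  have hmeas : ∀ ρ : Fin m → ℝ, Measurable fun x => ∑ s, ρ s * C s x :=
    fun ρ => Finset.measurable_sum _ fun s _ => (hCmeas s).const_mul (ρ s)
  have hint := integrable_sum_mul (μ := μ) hCmeas hCbd
  have hleast : IsLeast {v : ℝ | ∃ ρ ∈ stdSimplex ℝ (Fin m),
        v = ∫ x, (∑ s, ρ s * C s x) * (if 0 < (∑ s, ρstar s * C s x) then (1:ℝ) else 0) ∂μ}
      (∫ x, max (∑ s, ρstar s * C s x) 0 ∂μ) := by
    refine ⟨⟨ρstar, hρstar, by simp only [mul_ite_pos_eq_max_zero]⟩, ?_⟩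
    rintro _ ⟨ρ, hρ, rfl⟩
    refine integral_max_zero_le_integral_mul_ite (hmeas ρstar) (hint ρstar) (hint ρ) hnodeg
      fun t ht => ?_
    simpa only [sum_add_smul_sub_mul] using hmin _
      ((convex_stdSimplex ℝ (Fin m)).add_smul_sub_mem hρstar hρ (Ioc_subset_Icc_self ht))
  refine ⟨hleast.csInf_eq, ⟨⟨ρstar, hρstar, rfl⟩, ?_⟩, fun d hd hd01 => ?_⟩
  · rintro _ ⟨ρ, hρ, rfl⟩
    exact hmin ρ hρ
  rw [hleast.csInf_eq]
  calc _ ≤ ∫ x, (∑ s, ρstar s * C s x) * d x ∂μ :=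
        csInf_le (bddBelow_integral_sum_mul_mul hCbd hd01) ⟨ρstar, hρstar, rfl⟩
    _ ≤ ∫ x, max (∑ s, ρstar s * C s x) 0 ∂μ :=
        integral_mono ((hint ρstar).mul_bdd hd.aestronglyMeasurable
            (ae_of_all _ fun x => abs_le_one_of_eq_zero_or_eq_one (hd01 x)))
          (hint ρstar).pos_part fun x => mul_le_max_zero_of_eq_zero_or_eq_one (hd01 x)

/-- Theorem 1 of the paper: with `f_ρ = Σ_s ρ_s C_s`, if `ρ*` minimizes
`ρ ↦ ∫ max(f_ρ, 0) dμ` over the simplex and `μ(f_{ρ*} = 0) = 0`, then the rule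
`d* = 1{f_{ρ*} > 0}` attains worst-case policy value `∫ max(f_{ρ*}, 0) dμ
= min_{ρ∈Δ} ∫ max(f_ρ, 0) dμ` and maximizes the worst-case policy value over all
`{0,1}`-valued measurable rules. -/
theorem dro_itr_closed_form
    {𝓧 : Type*} [MeasurableSpace 𝓧] (μ : Measure 𝓧) [IsProbabilityMeasure μ]
    (m : ℕ) (hm : 1 ≤ m)
    (C : Fin m → 𝓧 → ℝ) (hCmeas : ∀ s, Measurable (C s))
    (B : ℝ) (hCbd : ∀ s x, |C s x| ≤ B)
    (ρstar : Fin m → ℝ) (hρstar : ρstar ∈ stdSimplex ℝ (Fin m))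
    (hmin : ∀ ρ ∈ stdSimplex ℝ (Fin m),
        (∫ x, max (∑ s, ρstar s * C s x) 0 ∂μ) ≤ ∫ x, max (∑ s, ρ s * C s x) 0 ∂μ)
    (hnodeg : μ {x | (∑ s, ρstar s * C s x) = 0} = 0) :
    (sInf {v : ℝ | ∃ ρ ∈ stdSimplex ℝ (Fin m),
          v = ∫ x, (∑ s, ρ s * C s x) * (if 0 < (∑ s, ρstar s * C s x) then (1:ℝ) else 0) ∂μ}
        = ∫ x, max (∑ s, ρstar s * C s x) 0 ∂μ)
    ∧ IsLeast {w : ℝ | ∃ ρ ∈ stdSimplex ℝ (Fin m),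
          w = ∫ x, max (∑ s, ρ s * C s x) 0 ∂μ}
        (∫ x, max (∑ s, ρstar s * C s x) 0 ∂μ)
    ∧ ∀ d : 𝓧 → ℝ, Measurable d → (∀ x, d x = 0 ∨ d x = 1) →
        sInf {v : ℝ | ∃ ρ ∈ stdSimplex ℝ (Fin m),
            v = ∫ x, (∑ s, ρ s * C s x) * d x ∂μ}
          ≤ sInf {v : ℝ | ∃ ρ ∈ stdSimplex ℝ (Fin m),
              v = ∫ x, (∑ s, ρ s * C s x)
                  * (if 0 < (∑ s, ρstar s * C s x) then (1:ℝ) else 0) ∂μ} :=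
  dro_itr_closed_form_general μ m C hCmeas B hCbd ρstar hρstar hmin hnodeg
end

section
/- Let μ be a probability measure on a measurable space 𝒳, let f, g : 𝒳 → ℝ be measurable with f μ-integrable, and suppose there exist c₂ > 0 and α > 0 such that μ({x : |f(x)| < γ}) ≤ c₂ γ^α for every γ > 0 (margin condition). Then for every γ > 0, ∫ |f(x)| · 1{1{f(x) > 0} ≠ 1{g(x) > 0}} dμ(x) ≤ c₂ γ^{1+α} + γ^{−1} ∫ (f(x) − g(x))² dμ(x). -/
/-!
Split the disagreement region `{sign f ≠ sign g}` according to whether `|f| < γ`. Where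
`|f| < γ`, the integrand is at most `γ`, and the margin condition bounds the measure of that
region by `c₂ γ^α`. Where `|f| ≥ γ`, the two signs differ, so `g` lies on the other side of `0`
and `γ |f| ≤ |f|² ≤ (f - g)²`.
-/

open MeasureTheory

lemma abs_le_abs_sub_of_pos_ne_pos {a b : ℝ} (h : (0 < a) ≠ (0 < b)) : |a| ≤ |a - b| := by
  rcases lt_or_ge 0 a with ha | ha
  · have hb : b ≤ 0 := not_lt.mp fun hb => h (by simp [ha, hb])
    rw [abs_of_pos ha, abs_of_nonneg (by linarith)]
    linarith
  · have hb : 0 < b := by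
      by_contra hb
      exact h (by simp [hb, not_lt.mpr ha])
    rw [abs_of_nonpos ha, abs_of_nonpos (by linarith)]
    linarith

lemma abs_le_ite_add_inv_mul_sq_of_pos_ne_pos {a b γ : ℝ} (hγ : 0 < γ) (h : (0 < a) ≠ (0 < b)) :
    |a| ≤ (if |a| < γ then γ else 0) + γ⁻¹ * (a - b) ^ 2 := by
  split_ifs with hlt
  · have : 0 ≤ γ⁻¹ * (a - b) ^ 2 := by positivity
    linarith
  · have hab := abs_le_abs_sub_of_pos_ne_pos h
    have hγa : γ ≤ |a| := not_lt.mp hlt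
    have hsq : |a| * γ ≤ (a - b) ^ 2 := by
      rw [← sq_abs (a - b), sq]
      exact mul_le_mul hab (hγa.trans hab) hγ.le (abs_nonneg _)
    rwa [zero_add, inv_mul_eq_div, le_div_iff₀ hγ]

lemma measurableSet_pos_ne_pos {X : Type*} [MeasurableSpace X] {f g : X → ℝ}
    (hf : Measurable f) (hg : Measurable g) : MeasurableSet {x | (0 < f x) ≠ (0 < g x)} := by
  have hset : {x | (0 < f x) ≠ (0 < g x)} = symmDiff {x | 0 < f x} {x | 0 < g x} := by
    ext x
    simp only [Set.mem_ofPred_eq, Set.mem_symmDiff, ne_eq, eq_iff_iff]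
    tauto
  rw [hset]
  exact (measurableSet_lt measurable_const hf).symmDiff (measurableSet_lt measurable_const hg)

lemma setIntegral_le_mul_measureReal_add_integral {X : Type*} [MeasurableSpace X]
    {μ : Measure X} [IsFiniteMeasure μ] {S T : Set X} (hS : MeasurableSet S)
    (hT : MeasurableSet T) {F G : X → ℝ} {c : ℝ} (hc : 0 ≤ c) (hF : 0 ≤ F) (hG : 0 ≤ G)
    (hGint : Integrable G μ) (hFG : ∀ x ∈ S, F x ≤ T.indicator (fun _ => c) x + G x) :
    ∫ x in S, F x ∂μ ≤ c * μ.real T + ∫ x, G x ∂μ := by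
  have hbound : Integrable (fun x => T.indicator (fun _ => c) x + G x) μ :=
    ((integrable_const c).indicator hT).add hGint
  calc ∫ x in S, F x ∂μ ≤ ∫ x in S, T.indicator (fun _ => c) x + G x ∂μ :=
        integral_mono_of_nonneg (Filter.Eventually.of_forall hF) hbound.integrableOn
          ((ae_restrict_iff' hS).mpr (Filter.Eventually.of_forall hFG))
    _ ≤ ∫ x, T.indicator (fun _ => c) x + G x ∂μ :=
        setIntegral_le_integral hbound (Filter.Eventually.of_forall fun x =>
          add_nonneg (Set.indicator_nonneg (fun _ _ => hc) x) (hG x))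
    _ = c * μ.real T + ∫ x, G x ∂μ := by
        rw [integral_add ((integrable_const c).indicator hT) hGint, integral_indicator_const c hT,
          smul_eq_mul, mul_comm]

theorem margin_split_inequality_general
    {𝓧 : Type*} [MeasurableSpace 𝓧] (μ : Measure 𝓧) [IsProbabilityMeasure μ]
    (f g : 𝓧 → ℝ) (hf : Measurable f) (hg : Measurable g)
    (hfgint : Integrable (fun x => (f x - g x) ^ 2) μ)
    (c₂ α : ℝ) (hc₂ : 0 < c₂)
    (hmargin : ∀ γ > (0:ℝ), μ {x | |f x| < γ} ≤ ENNReal.ofReal (c₂ * γ ^ α)) :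
    ∀ γ > (0:ℝ),
      (∫ x in {x | (0 < f x) ≠ (0 < g x)}, |f x| ∂μ)
        ≤ c₂ * γ ^ (1 + α) + γ⁻¹ * ∫ x, (f x - g x) ^ 2 ∂μ := by
  intro γ hγ
  have hsplit := setIntegral_le_mul_measureReal_add_integral
    (measurableSet_pos_ne_pos hf hg) (measurableSet_lt hf.abs measurable_const) hγ.le
    (fun x => abs_nonneg (f x)) (fun x => by positivity) (hfgint.const_mul γ⁻¹)
    fun x hx => by
      simpa only [Set.indicator_apply, Set.mem_ofPred_eq] using
        abs_le_ite_add_inv_mul_sq_of_pos_ne_pos hγ hx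
  have hmeasure : μ.real {x | |f x| < γ} ≤ c₂ * γ ^ α :=
    ENNReal.toReal_le_of_le_ofReal (by positivity) (hmargin γ hγ)
  calc ∫ x in {x | (0 < f x) ≠ (0 < g x)}, |f x| ∂μ
      ≤ γ * μ.real {x | |f x| < γ} + ∫ x, γ⁻¹ * (f x - g x) ^ 2 ∂μ := hsplit
    _ ≤ γ * (c₂ * γ ^ α) + γ⁻¹ * ∫ x, (f x - g x) ^ 2 ∂μ := by
        rw [integral_const_mul]
        gcongr
    _ = c₂ * γ ^ (1 + α) + γ⁻¹ * ∫ x, (f x - g x) ^ 2 ∂μ := by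
        rw [Real.rpow_add hγ, Real.rpow_one]
        ring

/-- Split inequality in the proof of Lemma 1: under the margin condition
`μ(|f| < γ) ≤ c₂ γ^α`, the `|f|`-weighted measure of the region where the rules
`1{f > 0}` and `1{g > 0}` disagree is at most `c₂ γ^{1+α} + γ⁻¹ ∫ (f-g)² dμ`. -/
theorem margin_split_inequality
    {𝓧 : Type*} [MeasurableSpace 𝓧] (μ : Measure 𝓧) [IsProbabilityMeasure μ]
    (f g : 𝓧 → ℝ) (hf : Measurable f) (hg : Measurable g)
    (hfint : Integrable f μ)
    (hfgint : Integrable (fun x => (f x - g x) ^ 2) μ)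
    (c₂ α : ℝ) (hc₂ : 0 < c₂) (hα : 0 < α)
    (hmargin : ∀ γ > (0:ℝ), μ {x | |f x| < γ} ≤ ENNReal.ofReal (c₂ * γ ^ α)) :
    ∀ γ > (0:ℝ),
      (∫ x in {x | (0 < f x) ≠ (0 < g x)}, |f x| ∂μ)
        ≤ c₂ * γ ^ (1 + α) + γ⁻¹ * ∫ x, (f x - g x) ^ 2 ∂μ :=
  margin_split_inequality_general μ f g hf hg hfgint c₂ α hc₂ hmargin
end

section
/- Let μ be a probability measure on a measurable space 𝒳, let f, g : 𝒳 → ℝ be measurable with f μ-integrable, and suppose there exist c₂ > 0 and α > 0 such that μ({x : |f(x)| < γ}) ≤ c₂ γ^α for every γ > 0 (margin condition). If ε > 0 and ∫ (f(x) − g(x))² dμ(x) ≤ ε, then ∫ max(f(x), 0) dμ(x) − ∫ f(x) · 1{g(x) > 0} dμ(x) ≤ (c₂ + 1) · ε^{(1+α)/(2+α)}. -/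
/-!
A wrong decision at `x` costs `|f x|`, and it can only happen when `g x` lies on the other side
of `0`, i.e. when `|f x| ≤ |f x - g x|`. Splitting at a threshold `γ`, the cost on `{|f| < γ}` is
at most `γ` per point, hence at most `γ · c₂ γ^α` in total by the margin condition, while off that
set `|f| ≤ |f| ^ 2 / γ ≤ (f - g) ^ 2 / γ`, which integrates to at most `ε / γ`. The choice
`γ = ε ^ (1 / (2 + α))` balances the two terms, both becoming `ε ^ ((1 + α) / (2 + α))`.
-/

open MeasureTheory

lemma max_zero_sub_mul_ite_le (a b : ℝ) :
    max a 0 - a * (if 0 < b then 1 else 0) ≤ if |a| ≤ |a - b| then |a| else 0 := by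
  rcases lt_or_ge 0 b with hb | hb <;> rcases lt_or_ge 0 a with ha | ha
  · simp only [hb, if_true, mul_one, max_eq_left ha.le, sub_self]
    split_ifs <;> simp
  · simp only [hb, if_true, max_eq_right ha, abs_of_nonpos ha]
    rw [if_pos (by rw [abs_of_neg (by linarith)]; linarith)]
    linarith
  · simp only [not_lt.2 hb, if_false, max_eq_left ha.le, abs_of_pos ha]
    rw [if_pos (by rw [abs_of_pos (by linarith)]; linarith)]
    linarith
  · simp only [not_lt.2 hb, if_false, mul_zero, max_eq_right ha, sub_zero]
    split_ifs <;> simp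

lemma ite_le_ite_add_sq_div {t d γ : ℝ} (ht : 0 ≤ t) (hγ : 0 < γ) :
    (if t ≤ |d| then t else 0) ≤ (if t < γ then γ else 0) + d ^ 2 / γ := by
  have hsq : 0 ≤ d ^ 2 / γ := by positivity
  split_ifs with htd htγ htγ
  · linarith
  · have : t ≤ d ^ 2 / γ := (le_div_iff₀ hγ).2 (by nlinarith [sq_abs d])
    linarith
  · linarith
  · linarith

lemma max_zero_sub_mul_ite_le_margin (a b : ℝ) {γ : ℝ} (hγ : 0 < γ) :
    max a 0 - a * (if 0 < b then 1 else 0) ≤ (if |a| < γ then γ else 0) + (a - b) ^ 2 / γ :=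
  (max_zero_sub_mul_ite_le a b).trans (ite_le_ite_add_sq_div (abs_nonneg a) hγ)

lemma integral_regret_le {𝓧 : Type*} [MeasurableSpace 𝓧] {μ : Measure 𝓧} [IsFiniteMeasure μ]
    {f g : 𝓧 → ℝ} (hf : Measurable f) (hg : Measurable g) (hfint : Integrable f μ)
    (hfgint : Integrable (fun x => (f x - g x) ^ 2) μ) {γ : ℝ} (hγ : 0 < γ) :
    (∫ x, max (f x) 0 ∂μ) - (∫ x, f x * (if 0 < g x then (1:ℝ) else 0) ∂μ)
      ≤ γ * μ.real {x | |f x| < γ} + (∫ x, (f x - g x) ^ 2 ∂μ) / γ := by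
  set s := {x | |f x| < γ}
  have hs : MeasurableSet s := measurableSet_lt hf.abs measurable_const
  have hmarg : Integrable (s.indicator fun _ => γ) μ := (integrable_const γ).indicator hs
  have hpred : Integrable (fun x => f x * (if 0 < g x then (1:ℝ) else 0)) μ := by
    refine hfint.abs.mono' (hf.mul (Measurable.ite (measurableSet_lt measurable_const hg)
      measurable_const measurable_const)).aestronglyMeasurable (ae_of_all _ fun x => ?_)
    split_ifs <;> simp
  calc (∫ x, max (f x) 0 ∂μ) - (∫ x, f x * (if 0 < g x then (1:ℝ) else 0) ∂μ)
      ≤ ∫ x, (s.indicator (fun _ => γ) x + (f x - g x) ^ 2 / γ) ∂μ := by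
        rw [← integral_sub hfint.pos_part hpred]
        exact integral_mono (hfint.pos_part.sub hpred) (hmarg.add (hfgint.div_const γ))
          fun x => max_zero_sub_mul_ite_le_margin (f x) (g x) hγ
    _ = γ * μ.real s + (∫ x, (f x - g x) ^ 2 ∂μ) / γ := by
        rw [integral_add hmarg (hfgint.div_const γ), integral_indicator_const γ hs, integral_div,
          smul_eq_mul, mul_comm]

lemma rpow_inv_mul_rpow_inv_rpow {ε α : ℝ} (hε : 0 < ε) (hα : 2 + α ≠ 0) :
    ε ^ (2 + α)⁻¹ * (ε ^ (2 + α)⁻¹) ^ α = ε ^ ((1 + α) / (2 + α)) := by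
  rw [← Real.rpow_mul hε.le, ← Real.rpow_add hε]
  congr 1
  field_simp

lemma div_rpow_inv_eq_rpow {ε α : ℝ} (hε : 0 < ε) (hα : 2 + α ≠ 0) :
    ε / ε ^ (2 + α)⁻¹ = ε ^ ((1 + α) / (2 + α)) := by
  nth_rw 1 [← Real.rpow_one ε]
  rw [← Real.rpow_sub hε]
  congr 1
  field_simp
  ring

/-- Optimized margin-based regret bound at the core of Lemma 1: under the margin condition
`μ(|f| < γ) ≤ c₂ γ^α` and the L² estimation error bound `∫ (f-g)² dμ ≤ ε`, the regret of
the estimated rule `1{g > 0}` satisfies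
`∫ max(f,0) dμ - ∫ f 1{g>0} dμ ≤ (c₂ + 1) ε^{(1+α)/(2+α)}`. -/
theorem margin_regret_bound
    {𝓧 : Type*} [MeasurableSpace 𝓧] (μ : Measure 𝓧) [IsProbabilityMeasure μ]
    (f g : 𝓧 → ℝ) (hf : Measurable f) (hg : Measurable g)
    (hfint : Integrable f μ)
    (hfgint : Integrable (fun x => (f x - g x) ^ 2) μ)
    (c₂ α : ℝ) (hc₂ : 0 < c₂) (hα : 0 < α)
    (hmargin : ∀ γ > (0:ℝ), μ {x | |f x| < γ} ≤ ENNReal.ofReal (c₂ * γ ^ α))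
    (ε : ℝ) (hε : 0 < ε) (hL2 : (∫ x, (f x - g x) ^ 2 ∂μ) ≤ ε) :
    (∫ x, max (f x) 0 ∂μ) - (∫ x, f x * (if 0 < g x then (1:ℝ) else 0) ∂μ)
      ≤ (c₂ + 1) * ε ^ ((1 + α) / (2 + α)) := by
  have h2α : 2 + α ≠ 0 := by positivity
  set γ := ε ^ (2 + α)⁻¹
  have hγ : 0 < γ := Real.rpow_pos_of_pos hε _
  have hsmall : μ.real {x | |f x| < γ} ≤ c₂ * γ ^ α :=
    ENNReal.toReal_le_of_le_ofReal (by positivity) (hmargin γ hγ)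
  calc _ ≤ γ * μ.real {x | |f x| < γ} + (∫ x, (f x - g x) ^ 2 ∂μ) / γ :=
        integral_regret_le hf hg hfint hfgint hγ
    _ ≤ c₂ * (γ * γ ^ α) + ε / γ := by
        rw [mul_left_comm]
        gcongr
    _ = (c₂ + 1) * ε ^ ((1 + α) / (2 + α)) := by
        rw [rpow_inv_mul_rpow_inv_rpow hε h2α, div_rpow_inv_eq_rpow hε h2α]
        ring
end

section
/- Let μ be a probability measure on a measurable space 𝒳. Fix an integer m ≥ 1 and let Δ = {ρ ∈ ℝ^m : ρ_s ≥ 0 for all s and Σ_{s=1}^m ρ_s = 1} be the probability simplex. Let C_1, …, C_m, Ĉ_1, …, Ĉ_m : 𝒳 → ℝ be measurable with |C_s(x)| ≤ c₁ for all x and s, let ω_1, …, ω_m and ω̂_1, …, ω̂_m : 𝒳 → [0,1] be measurable with Σ_s ω_s(x) = 1 and Σ_s ω̂_s(x) = 1 for every x, let ρ₀, ρ̂ ∈ Δ and δ ∈ [0,1], and set f(x) = Σ_s (δ ω_s(x) + (1−δ) ρ₀_s) C_s(x) and f̂(x) = Σ_s (δ ω̂_s(x) + (1−δ) ρ̂_s)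 Ĉ_s(x). Suppose there exist c₂ > 0 and α > 0 such that μ({x : |f(x)| < γ}) ≤ c₂ γ^α for every γ > 0, and suppose Δ_ω > 0 and Δ_C > 0 satisfy ∫ (ω̂_s − ω_s)² dμ ≤ Δ_ω and ∫ (Ĉ_s − C_s)² dμ ≤ Δ_C for every s. Then there exists a constant c > 0 depending only on m, c₁, c₂ and α such that ∫ f(x) 1{f(x) > 0} dμ(x) − ∫ f(x) 1{f̂(x) > 0} dμ(x) ≤ c · [ δ² Δ_ω + (1−δ)² Σ_{s=1}^m (ρ₀_s − ρ̂_s)² + Δ_C ]^{(1+α)/(2+α)}. -/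
/-!
Pointwise, `f · (1{f > 0} - 1{f̂ > 0})` vanishes unless `f` and `f̂` have opposite signs, and then
it equals `|f|`, which is at most `|f - f̂|`; hence it is at most `γ · 1{|f| < γ} + (f - f̂)² / γ` for every `γ > 0`.
Integrating, the margin condition bounds the first term by `c₂ γ^(1+α)`, while the L² errors bound
`∫ (f - f̂)²` by a multiple of `E = δ² Δ_ω + (1-δ)² ‖ρ₀ - ρ̂‖² + Δ_C` (the weights of `f̂` lie in
`[0, 1]` and `|C_s| ≤ c₁`). The choice `γ = E^(1/(2+α))` balances `γ^(1+α)` against `E / γ`.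
-/

open MeasureTheory

theorem mul_ite_pos_sub_ite_pos_le {u v γ : ℝ} (hγ : 0 < γ) :
    u * ((if 0 < u then (1:ℝ) else 0) - if 0 < v then (1:ℝ) else 0)
      ≤ (if |u| < γ then γ else 0) + (u - v) ^ 2 / γ := by
  have hsq : 0 ≤ (u - v) ^ 2 / γ := by positivity
  have hflip : |u| ≤ |u - v| → |u| ≤ (if |u| < γ then γ else 0) + (u - v) ^ 2 / γ := by
    intro huv
    split_ifs with hnear
    · linarith
    · rw [zero_add, le_div_iff₀ hγ, ← sq_abs (u - v)]
      nlinarith [abs_nonneg u, not_lt.1 hnear]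
  rcases lt_or_ge 0 u with hu | hu <;> rcases lt_or_ge 0 v with hv | hv
  · simp only [hu, hv, if_true, sub_self, mul_zero]; positivity
  · have : |u| ≤ |u - v| := by rw [abs_of_pos hu, abs_of_nonneg (by linarith)]; linarith
    simpa [hu, hv.not_gt, abs_of_pos hu] using hflip this
  · have : |u| ≤ |u - v| := by rw [abs_of_nonpos hu, abs_of_nonpos (by linarith)]; linarith
    simpa [hu.not_gt, hv, abs_of_nonpos hu] using hflip this
  · simp only [hu.not_gt, hv.not_gt, if_false, sub_self, mul_zero]; positivity

section
variable {X : Type*} [MeasurableSpace X] {μ : Measure X} [IsFiniteMeasure μ]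

theorem integral_mul_ite_pos_sub_le {F G : X → ℝ} {γ : ℝ} (hFm : Measurable F)
    (hFi : Integrable F μ) (hGm : Measurable G) (hFG : Integrable (fun x => (F x - G x) ^ 2) μ)
    (hγ : 0 < γ) :
    (∫ x, F x * (if 0 < F x then (1:ℝ) else 0) ∂μ) - ∫ x, F x * (if 0 < G x then (1:ℝ) else 0) ∂μ
      ≤ γ * μ.real {x | |F x| < γ} + (∫ x, (F x - G x) ^ 2 ∂μ) / γ := by
  have hnear : MeasurableSet {x | |F x| < γ} := measurableSet_lt hFm.abs measurable_const
  have hsel : ∀ {H : X → ℝ}, Measurable H →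
      Integrable (fun x => F x * if 0 < H x then (1:ℝ) else 0) μ := fun hH =>
    hFi.mono (hFm.mul (Measurable.ite (measurableSet_lt measurable_const hH) measurable_const
      measurable_const)).aestronglyMeasurable (ae_of_all _ fun x => by split_ifs <;> simp)
  rw [← integral_sub (hsel hFm) (hsel hGm)]
  calc _ ≤ ∫ x, ({x | |F x| < γ}.indicator (fun _ => γ) x + (F x - G x) ^ 2 / γ) ∂μ := by
        refine integral_mono ((hsel hFm).sub (hsel hGm))
          (((integrable_const γ).indicator hnear).add (hFG.div_const γ)) fun x => ?_
        simpa only [Set.indicator_apply, Set.mem_ofPred_eq, mul_sub] using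
          mul_ite_pos_sub_ite_pos_le (v := G x) hγ
    _ = _ := by
        rw [integral_add ((integrable_const γ).indicator hnear) (hFG.div_const γ),
          integral_indicator_const _ hnear, integral_div, smul_eq_mul, mul_comm]
end

theorem abs_sum_mul_le_of_mem_stdSimplex_s12 {ι : Type*} [Fintype ι] {w C : ι → ℝ} {c : ℝ}
    (hw : w ∈ stdSimplex ℝ ι) (hC : ∀ i, |C i| ≤ c) : |∑ i, w i * C i| ≤ c :=
  calc |∑ i, w i * C i| ≤ ∑ i, w i * c := by
        refine (Finset.abs_sum_le_sum_abs _ _).trans (Finset.sum_le_sum fun i _ => ?_)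
        rw [abs_mul, abs_of_nonneg (hw.1 i)]
        exact mul_le_mul_of_nonneg_left (hC i) (hw.1 i)
    _ = c := by rw [← Finset.sum_mul, hw.2, one_mul]

theorem mix_mem_stdSimplex {ι : Type*} [Fintype ι] {δ : ℝ} {p q : ι → ℝ}
    (hδ : δ ∈ Set.Icc (0:ℝ) 1) (hp : p ∈ stdSimplex ℝ ι) (hq : q ∈ stdSimplex ℝ ι) :
    (fun i => δ * p i + (1 - δ) * q i) ∈ stdSimplex ℝ ι :=
  convex_stdSimplex ℝ ι hp hq hδ.1 (sub_nonneg.2 hδ.2) (add_sub_cancel δ 1)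

theorem sq_add_mul_add_mul_le {x y z c q c₁ : ℝ} (hc : |c| ≤ c₁) (hq : |q| ≤ 1) :
    ((x + y) * c + q * z) ^ 2 ≤ 3 * (c₁ ^ 2 + 1) * (x ^ 2 + y ^ 2 + z ^ 2) := by
  have hc2 : c ^ 2 ≤ c₁ ^ 2 + 1 := by nlinarith [sq_abs c, abs_nonneg c]
  have hq2 : q ^ 2 ≤ c₁ ^ 2 + 1 := by nlinarith [sq_abs q, abs_nonneg q, sq_nonneg c₁]
  calc ((x + y) * c + q * z) ^ 2 ≤ 3 * (x ^ 2 * c ^ 2 + y ^ 2 * c ^ 2 + q ^ 2 * z ^ 2) := by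
        nlinarith [sq_nonneg (x * c - y * c), sq_nonneg (x * c - q * z), sq_nonneg (y * c - q * z)]
    _ ≤ 3 * (x ^ 2 * (c₁ ^ 2 + 1) + y ^ 2 * (c₁ ^ 2 + 1) + (c₁ ^ 2 + 1) * z ^ 2) := by gcongr
    _ = _ := by ring

theorem mul_mul_rpow_add_div_rpow_eq {E α a b : ℝ} (hE : 0 < E) (hα : 2 + α ≠ 0) :
    E ^ (1 / (2 + α)) * (a * (E ^ (1 / (2 + α))) ^ α) + b * E / E ^ (1 / (2 + α))
      = (a + b) * E ^ ((1 + α) / (2 + α)) := by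
  have hmul : E ^ (1 / (2 + α)) * (E ^ (1 / (2 + α))) ^ α = E ^ ((1 + α) / (2 + α)) := by
    rw [← Real.rpow_mul hE.le, ← Real.rpow_add hE]
    congr 1; field_simp
  have hdiv : E / E ^ (1 / (2 + α)) = E ^ ((1 + α) / (2 + α)) := by
    conv_lhs => arg 1; rw [← Real.rpow_one E]
    rw [← Real.rpow_sub hE]
    congr 1; field_simp; ring
  calc _ = a * (E ^ (1 / (2 + α)) * (E ^ (1 / (2 + α))) ^ α) + b * (E / E ^ (1 / (2 + α))) := by
        ring
    _ = _ := by rw [hmul, hdiv]; ring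

/-- The paper's decision function: `f = pdroScore δ ω ρ₀ C` and `f̂ = pdroScore δ ω̂ ρ̂ Ĉ`. -/
def pdroScore {X ι : Type*} [Fintype ι] (δ : ℝ) (ω : ι → X → ℝ) (ρ : ι → ℝ) (C : ι → X → ℝ)
    (x : X) : ℝ :=
  ∑ s, (δ * ω s x + (1 - δ) * ρ s) * C s x

theorem measurable_pdroScore {X ι : Type*} [Fintype ι] [MeasurableSpace X] {δ : ℝ}
    {ω C : ι → X → ℝ} {ρ : ι → ℝ} (hω : ∀ s, Measurable (ω s)) (hC : ∀ s, Measurable (C s)) :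
    Measurable (pdroScore δ ω ρ C) := by
  unfold pdroScore; fun_prop

theorem abs_pdroScore_le {X ι : Type*} [Fintype ι] {δ c₁ : ℝ} {ω C : ι → X → ℝ} {ρ : ι → ℝ}
    (hC : ∀ s x, |C s x| ≤ c₁) {x : X} (hω : (fun s => ω s x) ∈ stdSimplex ℝ ι)
    (hρ : ρ ∈ stdSimplex ℝ ι) (hδ : δ ∈ Set.Icc (0:ℝ) 1) : |pdroScore δ ω ρ C x| ≤ c₁ :=
  abs_sum_mul_le_of_mem_stdSimplex_s12 (mix_mem_stdSimplex hδ hω hρ) (hC · x)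

section
variable {X ι : Type*} [Fintype ι] {C Chat ω ωhat : ι → X → ℝ} {ρ₀ ρhat : ι → ℝ} {δ c₁ : ℝ}

theorem sq_pdroScore_sub_le (hC : ∀ s x, |C s x| ≤ c₁)
    (hωhat : ∀ x, (fun s => ωhat s x) ∈ stdSimplex ℝ ι)
    (hρhat : ρhat ∈ stdSimplex ℝ ι) (hδ : δ ∈ Set.Icc (0:ℝ) 1) (x : X) :
    (pdroScore δ ω ρ₀ C x - pdroScore δ ωhat ρhat Chat x) ^ 2
      ≤ Fintype.card ι * ∑ s, 3 * (c₁ ^ 2 + 1) * (δ ^ 2 * (ωhat s x - ω s x) ^ 2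
        + (1 - δ) ^ 2 * (ρ₀ s - ρhat s) ^ 2 + (Chat s x - C s x) ^ 2) := by
  have hw := mix_mem_stdSimplex hδ (hωhat x) hρhat
  rw [pdroScore, pdroScore, ← Finset.sum_sub_distrib]
  refine sq_sum_le_card_mul_sum_sq.trans (mul_le_mul_of_nonneg_left
    (Finset.sum_le_sum fun s _ => ?_) (Nat.cast_nonneg _))
  have hq : |δ * ωhat s x + (1 - δ) * ρhat s| ≤ 1 := by
    rw [abs_of_nonneg (hw.1 s)]; exact (mem_Icc_of_mem_stdSimplex hw s).2
  have := sq_add_mul_add_mul_le (x := δ * (ω s x - ωhat s x)) (y := (1 - δ) * (ρ₀ s - ρhat s))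
    (z := C s x - Chat s x) (hC s x) hq
  exact le_of_eq_of_le (by ring) (this.trans_eq (by ring))

variable [MeasurableSpace X] {μ : Measure X} [IsProbabilityMeasure μ]

theorem integral_sq_pdroScore_sub_le {Δω ΔC : ℝ} (hCm : ∀ s, Measurable (C s))
    (hChatm : ∀ s, Measurable (Chat s)) (hωm : ∀ s, Measurable (ω s))
    (hωhatm : ∀ s, Measurable (ωhat s))
    (hC : ∀ s x, |C s x| ≤ c₁) (hωhat : ∀ x, (fun s => ωhat s x) ∈ stdSimplex ℝ ι)
    (hρhat : ρhat ∈ stdSimplex ℝ ι) (hδ : δ ∈ Set.Icc (0:ℝ) 1)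
    (hIω : ∀ s, Integrable (fun x => (ωhat s x - ω s x) ^ 2) μ)
    (hIC : ∀ s, Integrable (fun x => (Chat s x - C s x) ^ 2) μ)
    (hEω : ∀ s, ∫ x, (ωhat s x - ω s x) ^ 2 ∂μ ≤ Δω)
    (hEC : ∀ s, ∫ x, (Chat s x - C s x) ^ 2 ∂μ ≤ ΔC) :
    Integrable (fun x => (pdroScore δ ω ρ₀ C x - pdroScore δ ωhat ρhat Chat x) ^ 2) μ ∧
      ∫ x, (pdroScore δ ω ρ₀ C x - pdroScore δ ωhat ρhat Chat x) ^ 2 ∂μ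
        ≤ 3 * Fintype.card ι ^ 2 * (c₁ ^ 2 + 1)
          * (δ ^ 2 * Δω + (1 - δ) ^ 2 * ∑ s, (ρ₀ s - ρhat s) ^ 2 + ΔC) := by
  let e : ι → X → ℝ := fun s x => δ ^ 2 * (ωhat s x - ω s x) ^ 2
    + (1 - δ) ^ 2 * (ρ₀ s - ρhat s) ^ 2 + (Chat s x - C s x) ^ 2
  have he₁ : ∀ s, Integrable
      (fun x => δ ^ 2 * (ωhat s x - ω s x) ^ 2 + (1 - δ) ^ 2 * (ρ₀ s - ρhat s) ^ 2) μ := fun s =>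
    ((hIω s).const_mul _).add (integrable_const _)
  have he : ∀ s, Integrable (e s) μ := fun s => (he₁ s).add (hIC s)
  have he_le : ∀ s, ∫ x, e s x ∂μ ≤ δ ^ 2 * Δω + (1 - δ) ^ 2 * ∑ s, (ρ₀ s - ρhat s) ^ 2 + ΔC := by
    intro s
    dsimp only [e]
    rw [integral_add (he₁ s) (hIC s), integral_add ((hIω s).const_mul _) (integrable_const _),
      integral_const_mul, integral_const, probReal_univ, one_smul]
    gcongr
    · exact hEω s
    · exact Finset.single_le_sum (fun t _ => sq_nonneg (ρ₀ t - ρhat t)) (Finset.mem_univ s)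
    · exact hEC s
  have hB : Integrable (fun x => (Fintype.card ι : ℝ) * ∑ s, 3 * (c₁ ^ 2 + 1) * e s x) μ :=
    (integrable_finsetSum _ fun s _ => (he s).const_mul _).const_mul _
  have hpt := sq_pdroScore_sub_le (ω := ω) (ρ₀ := ρ₀) (Chat := Chat) hC hωhat hρhat hδ
  have hI : Integrable (fun x => (pdroScore δ ω ρ₀ C x - pdroScore δ ωhat ρhat Chat x) ^ 2) μ :=
    hB.mono' (by unfold pdroScore; fun_prop)
      (ae_of_all _ fun x => by rw [Real.norm_eq_abs, abs_sq]; exact hpt x)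
  refine ⟨hI, (integral_mono hI hB hpt).trans ?_⟩
  rw [integral_const_mul, integral_finsetSum _ fun s _ => (he s).const_mul _]
  simp only [integral_const_mul]
  calc _ ≤ (Fintype.card ι : ℝ) * ∑ _s : ι, 3 * (c₁ ^ 2 + 1) *
        (δ ^ 2 * Δω + (1 - δ) ^ 2 * ∑ s, (ρ₀ s - ρhat s) ^ 2 + ΔC) := by
        gcongr with s; exact he_le s
    _ = _ := by rw [Finset.sum_const, Finset.card_univ, nsmul_eq_mul]; ring
end

theorem lemma1_regret_bound_general
    (m : ℕ) (c₁ c₂ α : ℝ) (hc₂ : 0 < c₂) (hα : 0 < α) :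
    ∃ c : ℝ, 0 < c ∧
      ∀ (𝓧 : Type) [MeasurableSpace 𝓧] (μ : Measure 𝓧) [IsProbabilityMeasure μ]
        (C Chat : Fin m → 𝓧 → ℝ) (ω ωhat : Fin m → 𝓧 → ℝ)
        (ρ₀ ρhat : Fin m → ℝ) (δ Δω ΔC : ℝ),
        (∀ s, Measurable (C s)) → (∀ s, Measurable (Chat s)) →
        (∀ s x, |C s x| ≤ c₁) →
        (∀ s, Measurable (ω s)) → (∀ s, Measurable (ωhat s)) →
        (∀ s x, ω s x ∈ Set.Icc (0:ℝ) 1) → (∀ s x, ωhat s x ∈ Set.Icc (0:ℝ) 1) →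
        (∀ x, (∑ s, ω s x) = 1) → (∀ x, (∑ s, ωhat s x) = 1) →
        ρ₀ ∈ stdSimplex ℝ (Fin m) → ρhat ∈ stdSimplex ℝ (Fin m) →
        δ ∈ Set.Icc (0:ℝ) 1 → 0 < Δω → 0 < ΔC →
        (∀ γ > (0:ℝ),
          μ {x | |∑ s, (δ * ω s x + (1 - δ) * ρ₀ s) * C s x| < γ}
            ≤ ENNReal.ofReal (c₂ * γ ^ α)) →
        (∀ s, Integrable (fun x => (ωhat s x - ω s x) ^ 2) μ) →
        (∀ s, Integrable (fun x => (Chat s x - C s x) ^ 2) μ) →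
        (∀ s, (∫ x, (ωhat s x - ω s x) ^ 2 ∂μ) ≤ Δω) →
        (∀ s, (∫ x, (Chat s x - C s x) ^ 2 ∂μ) ≤ ΔC) →
        (∫ x, (∑ s, (δ * ω s x + (1 - δ) * ρ₀ s) * C s x)
            * (if 0 < (∑ s, (δ * ω s x + (1 - δ) * ρ₀ s) * C s x) then (1:ℝ) else 0) ∂μ)
          - (∫ x, (∑ s, (δ * ω s x + (1 - δ) * ρ₀ s) * C s x)
              * (if 0 < (∑ s, (δ * ωhat s x + (1 - δ) * ρhat s) * Chat s x) then (1:ℝ) else 0) ∂μ)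
          ≤ c * (δ ^ 2 * Δω + (1 - δ) ^ 2 * (∑ s, (ρ₀ s - ρhat s) ^ 2) + ΔC)
              ^ ((1 + α) / (2 + α)) := by
  refine ⟨c₂ + 3 * m ^ 2 * (c₁ ^ 2 + 1), by positivity, ?_⟩
  intro 𝓧 _ μ _ C Chat ω ωhat ρ₀ ρhat δ Δω ΔC hCm hChatm hC hωm hωhatm hω hωhat hωsum hωhatsum
    hρ₀ hρhat hδ hΔω hΔC hmargin hIω hIC hEω hEC
  have hsimplex : ∀ {w : Fin m → 𝓧 → ℝ}, (∀ s x, w s x ∈ Set.Icc (0:ℝ) 1) →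
      (∀ x, ∑ s, w s x = 1) → ∀ x, (fun s => w s x) ∈ stdSimplex ℝ (Fin m) :=
    fun h0 h1 x => ⟨fun s => (h0 s x).1, h1 x⟩
  set E := δ ^ 2 * Δω + (1 - δ) ^ 2 * (∑ s, (ρ₀ s - ρhat s) ^ 2) + ΔC
  have hE : 0 < E := by positivity
  set γ := E ^ (1 / (2 + α))
  have hγ : 0 < γ := by positivity
  have hFm := measurable_pdroScore (δ := δ) (ρ := ρ₀) hωm hCm
  have hFi : Integrable (pdroScore δ ω ρ₀ C) μ := Integrable.of_bound hFm.aestronglyMeasurable c₁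
    (ae_of_all _ fun x => abs_pdroScore_le hC (hsimplex hω hωsum x) hρ₀ hδ)
  obtain ⟨hIFG, hFG⟩ := integral_sq_pdroScore_sub_le (μ := μ) (ρ₀ := ρ₀) hCm hChatm hωm hωhatm hC
    (hsimplex hωhat hωhatsum) hρhat hδ hIω hIC hEω hEC
  rw [Fintype.card_fin] at hFG
  have hnear : μ.real {x | |pdroScore δ ω ρ₀ C x| < γ} ≤ c₂ * γ ^ α :=
    ENNReal.toReal_le_of_le_ofReal (by positivity) (hmargin γ hγ)
  calc _ ≤ γ * μ.real {x | |pdroScore δ ω ρ₀ C x| < γ}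
        + (∫ x, (pdroScore δ ω ρ₀ C x - pdroScore δ ωhat ρhat Chat x) ^ 2 ∂μ) / γ :=
        integral_mul_ite_pos_sub_le hFm hFi (measurable_pdroScore hωhatm hChatm) hIFG hγ
    _ ≤ γ * (c₂ * γ ^ α) + 3 * m ^ 2 * (c₁ ^ 2 + 1) * E / γ := by gcongr
    _ = _ := mul_mul_rpow_add_div_rpow_eq hE (by positivity)

/-- Deterministic core of Lemma 1 of the paper: there is a constant `c > 0` depending only on
`m, c₁, c₂, α` such that, whenever the true source CATEs are bounded by `c₁` (C1), the
worst-case decision function `f` satisfies the margin condition with `c₂, α` (C2(i)), and the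
nuisance estimates have L² errors at most `Δ_ω` and `Δ_C` (C3), the regret of the estimated
PDRO rule `1{f̂ > 0}` is at most
`c (δ² Δ_ω + (1-δ)² Σ_s (ρ₀_s - ρ̂_s)² + Δ_C)^{(1+α)/(2+α)}`. -/
theorem lemma1_regret_bound
    (m : ℕ) (hm : 1 ≤ m) (c₁ c₂ α : ℝ) (hc₁ : 0 < c₁) (hc₂ : 0 < c₂) (hα : 0 < α) :
    ∃ c : ℝ, 0 < c ∧
      ∀ (𝓧 : Type) [MeasurableSpace 𝓧] (μ : Measure 𝓧) [IsProbabilityMeasure μ]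
        (C Chat : Fin m → 𝓧 → ℝ) (ω ωhat : Fin m → 𝓧 → ℝ)
        (ρ₀ ρhat : Fin m → ℝ) (δ Δω ΔC : ℝ),
        (∀ s, Measurable (C s)) → (∀ s, Measurable (Chat s)) →
        (∀ s x, |C s x| ≤ c₁) →
        (∀ s, Measurable (ω s)) → (∀ s, Measurable (ωhat s)) →
        (∀ s x, ω s x ∈ Set.Icc (0:ℝ) 1) → (∀ s x, ωhat s x ∈ Set.Icc (0:ℝ) 1) →
        (∀ x, (∑ s, ω s x) = 1) → (∀ x, (∑ s, ωhat s x) = 1) →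
        ρ₀ ∈ stdSimplex ℝ (Fin m) → ρhat ∈ stdSimplex ℝ (Fin m) →
        δ ∈ Set.Icc (0:ℝ) 1 → 0 < Δω → 0 < ΔC →
        (∀ γ > (0:ℝ),
          μ {x | |∑ s, (δ * ω s x + (1 - δ) * ρ₀ s) * C s x| < γ}
            ≤ ENNReal.ofReal (c₂ * γ ^ α)) →
        (∀ s, Integrable (fun x => (ωhat s x - ω s x) ^ 2) μ) →
        (∀ s, Integrable (fun x => (Chat s x - C s x) ^ 2) μ) →
        (∀ s, (∫ x, (ωhat s x - ω s x) ^ 2 ∂μ) ≤ Δω) →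
        (∀ s, (∫ x, (Chat s x - C s x) ^ 2 ∂μ) ≤ ΔC) →
        (∫ x, (∑ s, (δ * ω s x + (1 - δ) * ρ₀ s) * C s x)
            * (if 0 < (∑ s, (δ * ω s x + (1 - δ) * ρ₀ s) * C s x) then (1:ℝ) else 0) ∂μ)
          - (∫ x, (∑ s, (δ * ω s x + (1 - δ) * ρ₀ s) * C s x)
              * (if 0 < (∑ s, (δ * ωhat s x + (1 - δ) * ρhat s) * Chat s x) then (1:ℝ) else 0) ∂μ)
          ≤ c * (δ ^ 2 * Δω + (1 - δ) ^ 2 * (∑ s, (ρ₀ s - ρhat s) ^ 2) + ΔC)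
              ^ ((1 + α) / (2 + α)) :=
  lemma1_regret_bound_general m c₁ c₂ α hc₂ hα
end

section
/- Let μ be a probability measure on a measurable space 𝒳 and f : 𝒳 → ℝ a μ-integrable measurable function. For h > 0 define Φ_h : ℝ → ℝ by Φ_h(u) = 0 for u < −h, Φ_h(u) = (u+h)/(2h) for −h ≤ u ≤ h, and Φ_h(u) = 1 for u > h. Then | ∫ f(x)·Φ_h(f(x)) dμ(x) − ∫ max(f(x), 0) dμ(x) | ≤ h/8. -/
/-!
On `|u| ≤ h` one has `u Φ_h(u) - max u 0 = |u| (|u| - h) / (2h) ∈ [-h/8, 0]`, and outside that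
window the two integrands agree, so the integrands differ by at most `h/8` everywhere; integrating
this pointwise bound against a probability measure gives the claim.
-/

open MeasureTheory

noncomputable def smoothedIndicator (h u : ℝ) : ℝ :=
  if u < -h then 0 else if u ≤ h then (u + h) / (2 * h) else 1

theorem measurable_smoothedIndicator (h : ℝ) : Measurable (smoothedIndicator h) :=
  Measurable.ite (measurableSet_lt measurable_id measurable_const) measurable_const <|
    Measurable.ite (measurableSet_le measurable_id measurable_const)
      ((measurable_id.add_const h).div_const _) measurable_const

theorem abs_smoothedIndicator_le_one {h : ℝ} (hh : 0 < h) (u : ℝ) :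
    |smoothedIndicator h u| ≤ 1 := by
  unfold smoothedIndicator
  split_ifs with hlt hle
  · simp
  · rw [abs_le, le_div_iff₀ (by positivity), div_le_one (by positivity)]
    constructor <;> linarith
  · simp

theorem mul_smoothedIndicator_sub_max_of_abs_le {h u : ℝ} (hh : 0 < h) (hu : |u| ≤ h) :
    u * smoothedIndicator h u - max u 0 = |u| * (|u| - h) / (2 * h) := by
  obtain ⟨hlo, hhi⟩ := abs_le.mp hu
  rw [smoothedIndicator, if_neg (not_lt.mpr hlo), if_pos hhi]
  rcases le_total u 0 with hu0 | hu0
  · rw [max_eq_right hu0, abs_of_nonpos hu0]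
    field_simp
    ring
  · rw [max_eq_left hu0, abs_of_nonneg hu0]
    field_simp
    ring

theorem mul_smoothedIndicator_of_lt_abs {h u : ℝ} (hh : 0 ≤ h) (hu : h < |u|) :
    u * smoothedIndicator h u = max u 0 := by
  rcases lt_abs.mp hu with hpos | hneg
  · rw [smoothedIndicator, if_neg (by linarith), if_neg (by linarith), max_eq_left (by linarith),
      mul_one]
  · rw [smoothedIndicator, if_pos (by linarith), max_eq_right (by linarith), mul_zero]

theorem abs_mul_smoothedIndicator_sub_max_le {h : ℝ} (hh : 0 < h) (u : ℝ) :
    |u * smoothedIndicator h u - max u 0| ≤ h / 8 := by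
  rcases le_or_gt |u| h with hu | hu
  · rw [mul_smoothedIndicator_sub_max_of_abs_le hh hu, abs_le,
      le_div_iff₀ (by positivity), div_le_iff₀ (by positivity)]
    constructor
    · nlinarith [sq_nonneg (2 * |u| - h)]
    · nlinarith [abs_nonneg u]
  · rw [mul_smoothedIndicator_of_lt_abs hh.le hu, sub_self, abs_zero]
    positivity

theorem MeasureTheory.Integrable.mul_smoothedIndicator_comp {α : Type*} [MeasurableSpace α]
    {μ : Measure α} {f : α → ℝ} (hf : Integrable f μ) {h : ℝ} (hh : 0 < h) :
    Integrable (fun x ↦ f x * smoothedIndicator h (f x)) μ :=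
  hf.mul_bdd
    ((measurable_smoothedIndicator h).comp_aemeasurable hf.aemeasurable).aestronglyMeasurable
    (ae_of_all _ fun x ↦ by simpa using abs_smoothedIndicator_le_one hh (f x))

theorem abs_integral_sub_le_of_abs_sub_le {α : Type*} [MeasurableSpace α] {μ : Measure α}
    [IsProbabilityMeasure μ] {g k : α → ℝ} (hg : Integrable g μ) (hk : Integrable k μ) {C : ℝ}
    (hC : ∀ x, |g x - k x| ≤ C) :
    |∫ x, g x ∂μ - ∫ x, k x ∂μ| ≤ C := by
  rw [← integral_sub hg hk]
  simpa using norm_integral_le_of_norm_le_const (μ := μ) (f := fun x ↦ g x - k x) (ae_of_all _ hC)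

theorem surrogate_objective_error_general
    {𝓧 : Type*} [MeasurableSpace 𝓧] (μ : Measure 𝓧) [IsProbabilityMeasure μ]
    (f : 𝓧 → ℝ) (hfint : Integrable f μ)
    (h : ℝ) (hh : 0 < h) :
    |(∫ x, f x * (if f x < -h then (0:ℝ) else if f x ≤ h then (f x + h) / (2 * h) else 1) ∂μ)
        - ∫ x, max (f x) 0 ∂μ|
      ≤ h / 8 :=
  abs_integral_sub_le_of_abs_sub_le (hfint.mul_smoothedIndicator_comp hh) hfint.pos_part
    fun x ↦ abs_mul_smoothedIndicator_sub_max_le hh (f x)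

/-- Uniform approximation of the worst-case objective by the smoothed surrogate loss:
`|∫ f Φ_h(f) dμ - ∫ max(f,0) dμ| ≤ h/8`. -/
theorem surrogate_objective_error
    {𝓧 : Type*} [MeasurableSpace 𝓧] (μ : Measure 𝓧) [IsProbabilityMeasure μ]
    (f : 𝓧 → ℝ) (hf : Measurable f) (hfint : Integrable f μ)
    (h : ℝ) (hh : 0 < h) :
    |(∫ x, f x * (if f x < -h then (0:ℝ) else if f x ≤ h then (f x + h) / (2 * h) else 1) ∂μ)
        - ∫ x, max (f x) 0 ∂μ|
      ≤ h / 8 :=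
  surrogate_objective_error_general μ f hfint h hh
end

section
/- Let μ be a probability measure on a measurable space 𝒳. Fix an integer m ≥ 1 and let Δ = {ρ ∈ ℝ^m : ρ_s ≥ 0 for all s and Σ_{s=1}^m ρ_s = 1} be the probability simplex. Let C_1, …, C_m : 𝒳 → ℝ be measurable and μ-integrable, let ω_1, …, ω_m : 𝒳 → [0,1] be measurable with Σ_{s=1}^m ω_s(x) = 1 for every x, let δ ∈ [0,1], and for ρ ∈ Δ define f_ρ^δ(x) = Σ_{s=1}^m (δ ω_s(x) + (1−δ) ρ_s) C_s(x). For h > 0 define Φ_h : ℝ → ℝ by Φ_h(u) = 0 for u < −h, Φ_h(u) = (u+h)/(2h) for −h ≤ u ≤ h, and Φ_h(u) = 1 for u > h. If ρ̃ ∈ Δ minimizes the smoothed surrogate objective ρ ↦ ∫ f_ρ^δ(x)·Φ_h(f_ρ^δ(x)) dμ(x) over Δ, then ∫ max(f_{ρ̃}^δ(x), 0) dμ(x) ≤ inf_{ρ ∈ Δ} ∫ max(f_ρ^δ(x), 0) dμ(x) + h/4. -/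
/-!
Pointwise, `0 ≤ max u 0 - u Φ_h(u) ≤ h/8`: the two sides agree outside `[-h, h]`, and inside
the gap is `-u(u+h)/(2h)` for `u ≤ 0` and `u(h-u)/(2h)` for `u ≥ 0`, parabolas peaking at `h/8`.
Integrating against a probability measure, the surrogate objective stays within `h/8` below the
true one for every `ρ`, so minimizing the surrogate loses at most `h/8 ≤ h/4`.
-/

open MeasureTheory

/-- The paper's `Φ_h`. -/
noncomputable def smoothStep (h u : ℝ) : ℝ :=
  if u < -h then 0 else if u ≤ h then (u + h) / (2 * h) else 1

section SmoothStep

variable {h : ℝ}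

theorem measurable_smoothStep (h : ℝ) : Measurable (smoothStep h) :=
  Measurable.ite (measurableSet_lt measurable_id measurable_const) measurable_const <|
    Measurable.ite (measurableSet_le measurable_id measurable_const)
      ((measurable_id.add_const h).div_const _) measurable_const

theorem smoothStep_mem_Icc (hh : 0 < h) (u : ℝ) : smoothStep h u ∈ Set.Icc (0 : ℝ) 1 := by
  unfold smoothStep
  split_ifs with hlow hmid
  · simp
  · push Not at hlow
    exact ⟨div_nonneg (by linarith) (by linarith), (div_le_one (by linarith)).2 (by linarith)⟩
  · simp

theorem mul_smoothStep_le_max (hh : 0 < h) (u : ℝ) : u * smoothStep h u ≤ max u 0 := by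
  unfold smoothStep
  split_ifs with hlow hmid
  · simp
  · rw [mul_div_assoc', div_le_iff₀ (by linarith)]
    rcases le_total u 0 with hu | hu
    · rw [max_eq_right hu]; nlinarith
    · rw [max_eq_left hu]; nlinarith
  · simp

theorem max_le_mul_smoothStep_add (hh : 0 < h) (u : ℝ) :
    max u 0 ≤ u * smoothStep h u + h / 8 := by
  unfold smoothStep
  split_ifs with hlow hmid
  · rw [max_eq_right (by linarith)]; linarith
  · rw [mul_div_assoc', ← sub_le_iff_le_add, le_div_iff₀ (by linarith)]
    rcases le_total u 0 with hu | hu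
    · rw [max_eq_right hu]; nlinarith [sq_nonneg (2 * u + h)]
    · rw [max_eq_left hu]; nlinarith [sq_nonneg (2 * u - h)]
  · push Not at hlow hmid
    rw [max_eq_left (by linarith)]; linarith

end SmoothStep

section Surrogate

variable {𝓧 : Type*} [MeasurableSpace 𝓧] {μ : Measure 𝓧} {f : 𝓧 → ℝ} {h : ℝ}

theorem MeasureTheory.Integrable.mul_smoothStep (hf : Integrable f μ) (hh : 0 < h) :
    Integrable (fun x => f x * smoothStep h (f x)) μ :=
  hf.mul_bdd ((measurable_smoothStep h).comp_aemeasurable hf.aemeasurable).aestronglyMeasurable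
    (c := 1) <| Filter.Eventually.of_forall fun x => by
      obtain ⟨hnonneg, hle⟩ := smoothStep_mem_Icc hh (f x)
      rwa [Real.norm_eq_abs, abs_of_nonneg hnonneg]

theorem integral_mul_smoothStep_le_integral_max (hf : Integrable f μ) (hh : 0 < h) :
    ∫ x, f x * smoothStep h (f x) ∂μ ≤ ∫ x, max (f x) 0 ∂μ :=
  integral_mono (hf.mul_smoothStep hh) hf.pos_part fun x => mul_smoothStep_le_max hh (f x)

theorem integral_max_le_integral_mul_smoothStep_add [IsProbabilityMeasure μ]
    (hf : Integrable f μ) (hh : 0 < h) :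
    ∫ x, max (f x) 0 ∂μ ≤ ∫ x, f x * smoothStep h (f x) ∂μ + h / 8 := by
  calc ∫ x, max (f x) 0 ∂μ ≤ ∫ x, (f x * smoothStep h (f x) + h / 8) ∂μ :=
        integral_mono hf.pos_part ((hf.mul_smoothStep hh).add (integrable_const (h / 8)))
          fun x => max_le_mul_smoothStep_add hh (f x)
    _ = ∫ x, f x * smoothStep h (f x) ∂μ + h / 8 := by
        rw [integral_add (hf.mul_smoothStep hh) (integrable_const _), integral_const,
          probReal_univ, one_smul]

theorem integral_max_le_of_integral_mul_smoothStep_le [IsProbabilityMeasure μ] {g : 𝓧 → ℝ}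
    (hf : Integrable f μ) (hg : Integrable g μ) (hh : 0 < h)
    (hfg : ∫ x, f x * smoothStep h (f x) ∂μ ≤ ∫ x, g x * smoothStep h (g x) ∂μ) :
    ∫ x, max (f x) 0 ∂μ ≤ ∫ x, max (g x) 0 ∂μ + h / 8 := by
  linarith [integral_max_le_integral_mul_smoothStep_add hf hh,
    integral_mul_smoothStep_le_integral_max hg hh]

end Surrogate

theorem integrable_sum_mixture_mul {𝓧 ι : Type*} [MeasurableSpace 𝓧] [Fintype ι]
    {μ : Measure 𝓧} {C ω : ι → 𝓧 → ℝ} (hC : ∀ s, Integrable (C s) μ)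
    (hωmeas : ∀ s, AEStronglyMeasurable (ω s) μ) (hωle : ∀ s x, |ω s x| ≤ 1) (δ : ℝ)
    (ρ : ι → ℝ) : Integrable (fun x => ∑ s, (δ * ω s x + (1 - δ) * ρ s) * C s x) μ := by
  refine integrable_finsetSum _ fun s _ => (hC s).bdd_mul (c := |δ| + |(1 - δ) * ρ s|)
    (((hωmeas s).const_mul δ).add aestronglyMeasurable_const) (Filter.Eventually.of_forall ?_)
  intro x
  calc ‖δ * ω s x + (1 - δ) * ρ s‖ ≤ |δ| * |ω s x| + |(1 - δ) * ρ s| := by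
        rw [Real.norm_eq_abs, ← abs_mul]; exact abs_add_le _ _
    _ ≤ |δ| + |(1 - δ) * ρ s| := by
        gcongr; exact mul_le_of_le_one_right (abs_nonneg δ) (hωle s x)

theorem surrogate_minimizer_near_optimal_general
    {𝓧 : Type*} [MeasurableSpace 𝓧] (μ : Measure 𝓧) [IsProbabilityMeasure μ]
    (m : ℕ)
    (C : Fin m → 𝓧 → ℝ) (hCint : ∀ s, Integrable (C s) μ)
    (ω : Fin m → 𝓧 → ℝ) (hωmeas : ∀ s, Measurable (ω s))
    (hω01 : ∀ s x, ω s x ∈ Set.Icc (0:ℝ) 1)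
    (δ : ℝ)
    (h : ℝ) (hh : 0 < h)
    (ρt : Fin m → ℝ)
    (hmin : ∀ ρ ∈ stdSimplex ℝ (Fin m),
        (∫ x, (∑ s, (δ * ω s x + (1 - δ) * ρt s) * C s x)
            * (if (∑ s, (δ * ω s x + (1 - δ) * ρt s) * C s x) < -h then (0:ℝ)
              else if (∑ s, (δ * ω s x + (1 - δ) * ρt s) * C s x) ≤ h
                then ((∑ s, (δ * ω s x + (1 - δ) * ρt s) * C s x) + h) / (2 * h)
                else 1) ∂μ)
          ≤ ∫ x, (∑ s, (δ * ω s x + (1 - δ) * ρ s) * C s x)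
              * (if (∑ s, (δ * ω s x + (1 - δ) * ρ s) * C s x) < -h then (0:ℝ)
                else if (∑ s, (δ * ω s x + (1 - δ) * ρ s) * C s x) ≤ h
                  then ((∑ s, (δ * ω s x + (1 - δ) * ρ s) * C s x) + h) / (2 * h)
                  else 1) ∂μ) :
    ∀ ρ ∈ stdSimplex ℝ (Fin m),
      (∫ x, max (∑ s, (δ * ω s x + (1 - δ) * ρt s) * C s x) 0 ∂μ)
        ≤ (∫ x, max (∑ s, (δ * ω s x + (1 - δ) * ρ s) * C s x) 0 ∂μ) + h / 4 := by
  intro ρ hρ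
  have hωle : ∀ s x, |ω s x| ≤ 1 := fun s x =>
    abs_le.2 ⟨by linarith [(hω01 s x).1], (hω01 s x).2⟩
  have hint := integrable_sum_mixture_mul hCint (fun s => (hωmeas s).aestronglyMeasurable) hωle δ
  have hnear := integral_max_le_of_integral_mul_smoothStep_le (hint ρt) (hint ρ) hh (hmin ρ hρ)
  linarith

/-- Near-optimality of the population surrogate minimizer (Step 3 of the estimation
procedure): if `ρ̃` minimizes the smoothed surrogate objective `ρ ↦ ∫ f_ρ^δ Φ_h(f_ρ^δ) dμ`
over the simplex, then `∫ max(f_{ρ̃}^δ, 0) dμ ≤ inf_{ρ∈Δ} ∫ max(f_ρ^δ, 0) dμ + h/4`. -/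
theorem surrogate_minimizer_near_optimal
    {𝓧 : Type*} [MeasurableSpace 𝓧] (μ : Measure 𝓧) [IsProbabilityMeasure μ]
    (m : ℕ) (hm : 1 ≤ m)
    (C : Fin m → 𝓧 → ℝ) (hCmeas : ∀ s, Measurable (C s)) (hCint : ∀ s, Integrable (C s) μ)
    (ω : Fin m → 𝓧 → ℝ) (hωmeas : ∀ s, Measurable (ω s))
    (hω01 : ∀ s x, ω s x ∈ Set.Icc (0:ℝ) 1) (hωsum : ∀ x, (∑ s, ω s x) = 1)
    (δ : ℝ) (hδ : δ ∈ Set.Icc (0:ℝ) 1)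
    (h : ℝ) (hh : 0 < h)
    (ρt : Fin m → ℝ) (hρt : ρt ∈ stdSimplex ℝ (Fin m))
    (hmin : ∀ ρ ∈ stdSimplex ℝ (Fin m),
        (∫ x, (∑ s, (δ * ω s x + (1 - δ) * ρt s) * C s x)
            * (if (∑ s, (δ * ω s x + (1 - δ) * ρt s) * C s x) < -h then (0:ℝ)
              else if (∑ s, (δ * ω s x + (1 - δ) * ρt s) * C s x) ≤ h
                then ((∑ s, (δ * ω s x + (1 - δ) * ρt s) * C s x) + h) / (2 * h)
                else 1) ∂μ)
          ≤ ∫ x, (∑ s, (δ * ω s x + (1 - δ) * ρ s) * C s x)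
              * (if (∑ s, (δ * ω s x + (1 - δ) * ρ s) * C s x) < -h then (0:ℝ)
                else if (∑ s, (δ * ω s x + (1 - δ) * ρ s) * C s x) ≤ h
                  then ((∑ s, (δ * ω s x + (1 - δ) * ρ s) * C s x) + h) / (2 * h)
                  else 1) ∂μ) :
    ∀ ρ ∈ stdSimplex ℝ (Fin m),
      (∫ x, max (∑ s, (δ * ω s x + (1 - δ) * ρt s) * C s x) 0 ∂μ)
        ≤ (∫ x, max (∑ s, (δ * ω s x + (1 - δ) * ρ s) * C s x) 0 ∂μ) + h / 4 :=
  surrogate_minimizer_near_optimal_general μ m C hCint ω hωmeas hω01 δ h hh ρt hmin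
end
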